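/- arXiv:1111.1345 — 5 statements merged into one kernel-verified Lean document; each statement's English description precedes it below -/
import Mathlib

section
/- Let α be a finite measurable partition of a probability space (X, B, μ) and let ε > 0. Then there exists δ > 0 such that for every σ-subalgebra S of B with max_{A∈α} inf_{B∈S} μ(A Δ B) < δ, there exists a Boolean algebra homomorphism θ from the finite algebra Σ(α) generated by α into S satisfying μ(θ(A) Δ A) < ε for all A in Σ(α). -/
open MeasureTheory

lemma symmDiff_iUnion_subset' {ι X : Type*} (f g : ι → Set X) :
    symmDiff (⋃ i, f i) (⋃ i, g i) ⊆ ⋃ i, symmDiff (f i) (g i) := by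
  intro x hx
  rw [Set.mem_symmDiff] at hx
  rcases hx with ⟨h1, h2⟩ | ⟨h1, h2⟩
  · obtain ⟨i, hi⟩ := Set.mem_iUnion.mp h1
    exact Set.mem_iUnion.mpr ⟨i, Set.mem_symmDiff.mpr (Or.inl ⟨hi, fun h => h2 (Set.mem_iUnion.mpr ⟨i, h⟩)⟩)⟩
  · obtain ⟨i, hi⟩ := Set.mem_iUnion.mp h1
    exact Set.mem_iUnion.mpr ⟨i, Set.mem_symmDiff.mpr (Or.inr ⟨hi, fun h => h2 (Set.mem_iUnion.mpr ⟨i, h⟩)⟩)⟩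

lemma symmDiff_biUnion_subset' {ι X : Type*} (J : Finset ι) (f g : ι → Set X) :
    symmDiff (⋃ i ∈ J, f i) (⋃ i ∈ J, g i) ⊆ ⋃ i ∈ J, symmDiff (f i) (g i) := by
  intro x hx
  rw [Set.mem_symmDiff] at hx
  rcases hx with ⟨h1, h2⟩ | ⟨h1, h2⟩
  · obtain ⟨i, hiJ, hi⟩ := Set.mem_iUnion₂.mp h1
    exact Set.mem_iUnion₂.mpr ⟨i, hiJ, Set.mem_symmDiff.mpr (Or.inl ⟨hi, fun h => h2 (Set.mem_iUnion₂.mpr ⟨i, hiJ, h⟩)⟩)⟩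
  · obtain ⟨i, hiJ, hi⟩ := Set.mem_iUnion₂.mp h1
    exact Set.mem_iUnion₂.mpr ⟨i, hiJ, Set.mem_symmDiff.mpr (Or.inr ⟨hi, fun h => h2 (Set.mem_iUnion₂.mpr ⟨i, hiJ, h⟩)⟩)⟩

/-- Let `α = {A 0, …, A (n-1)}` be a finite measurable partition of a
probability space `(X, B, μ)` and `ε > 0`.  Then there is `δ > 0` such that for every
σ-subalgebra `S` of `B` with `max_{A∈α} inf_{B∈S} μ(A Δ B) < δ` there is a Boolean algebra
homomorphism `θ : Σ(α) → S` (determined by the images `t i` of the atoms, with a general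
element `⋃ i∈J, A i` of `Σ(α)` sent to `⋃ i∈J, t i`) with `μ(θ(A) Δ A) < ε` for all
`A ∈ Σ(α)`. -/
theorem stmt0 {X : Type*} [mX : MeasurableSpace X] (μ : Measure X) [IsProbabilityMeasure μ]
    {n : ℕ} (A : Fin n → Set X)
    (hmeas : ∀ i, MeasurableSet (A i))
    (hdisj : Pairwise (Function.onFun Disjoint A))
    (hcover : (⋃ i, A i) = Set.univ)
    (ε : ℝ) (hε : 0 < ε) :
    ∃ δ > 0, ∀ S : MeasurableSpace X, S ≤ mX →
      (∀ i, ∃ B : Set X, MeasurableSet[S] B ∧ (μ (symmDiff (A i) B)).toReal < δ) →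
      ∃ t : Fin n → Set X,
        (∀ i, MeasurableSet[S] (t i)) ∧
        Pairwise (Function.onFun Disjoint t) ∧
        (⋃ i, t i) = Set.univ ∧
        ∀ J : Finset (Fin n),
          (μ (symmDiff (⋃ i ∈ J, t i) (⋃ i ∈ J, A i))).toReal < ε := by
  classical
  have hn : 0 < n := by
    rcases Nat.eq_zero_or_pos n with rfl | h
    · rw [Set.iUnion_of_empty] at hcover
      have h1 : μ Set.univ = 1 := measure_univ
      rw [← hcover] at h1
      simp at h1
    · exact h
  set δ : ℝ := ε / (n ^ 2 + 1) with hδdef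
  have hδpos : 0 < δ := by positivity
  refine ⟨δ, hδpos, ?_⟩
  intro S hS hB
  choose B hBmeas hBclose using hB
  have hBc : ∀ i, μ (symmDiff (B i) (A i)) < ENNReal.ofReal δ := by
    intro i
    rw [symmDiff_comm, ENNReal.lt_ofReal_iff_toReal_lt (measure_ne_top μ _)]
    exact hBclose i
  set U : Set X := ⋃ k, symmDiff (B k) (A k) with hU
  set u : Fin n → Set X := fun i => B i \ ⋃ j, ⋃ _ : j < i, B j with hu
  have humeas : ∀ i, MeasurableSet[S] (u i) := fun i =>
    (hBmeas i).diff (MeasurableSet.iUnion fun j => MeasurableSet.iUnion fun _ => hBmeas j)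
  have huB : ∀ i, u i ⊆ B i := fun i => Set.diff_subset
  have hudisj : ∀ i j : Fin n, i ≠ j → Disjoint (u i) (u j) := by
    intro i j hij
    rw [Set.disjoint_left]
    intro x hxi hxj
    rcases lt_or_gt_of_ne hij with h | h
    · exact hxj.2 (Set.mem_iUnion.mpr ⟨i, Set.mem_iUnion.mpr ⟨h, hxi.1⟩⟩)
    · exact hxi.2 (Set.mem_iUnion.mpr ⟨j, Set.mem_iUnion.mpr ⟨h, hxj.1⟩⟩)
  have huA : ∀ i, symmDiff (u i) (A i) ⊆ U := by
    intro i x hx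
    rw [Set.mem_symmDiff] at hx
    rcases hx with ⟨h1, h2⟩ | ⟨h1, h2⟩
    · exact Set.mem_iUnion.mpr ⟨i, Set.mem_symmDiff.mpr (Or.inl ⟨huB i h1, h2⟩)⟩
    · by_cases hxB : x ∈ B i
      · have : x ∈ ⋃ j, ⋃ _ : j < i, B j := by
          by_contra hc
          exact h2 ⟨hxB, hc⟩
        obtain ⟨j, hj⟩ := Set.mem_iUnion.mp this
        obtain ⟨hji, hxBj⟩ := Set.mem_iUnion.mp hj
        have hxAj : x ∉ A j := fun hxa =>
          (hdisj (ne_of_lt hji).symm).le_bot ⟨h1, hxa⟩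
        exact Set.mem_iUnion.mpr ⟨j, Set.mem_symmDiff.mpr (Or.inl ⟨hxBj, hxAj⟩)⟩
      · exact Set.mem_iUnion.mpr ⟨i, Set.mem_symmDiff.mpr (Or.inr ⟨h1, hxB⟩)⟩
  set i0 : Fin n := ⟨0, hn⟩ with hi0
  set v : Fin n → Set X := fun j => if j = i0 then (∅ : Set X) else u j with hv
  set w : Fin n → Set X := fun j => if j = i0 then (∅ : Set X) else A j with hw
  have hA0 : A i0 = (⋃ j, w j)ᶜ := by
    ext x
    simp only [Set.mem_compl_iff, Set.mem_iUnion]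
    constructor
    · rintro hx ⟨j, hj⟩
      simp only [hw] at hj
      split_ifs at hj with hj0
      · exact hj
      · exact (hdisj hj0).le_bot ⟨hj, hx⟩
    · intro hx
      have : x ∈ ⋃ i, A i := hcover ▸ Set.mem_univ x
      obtain ⟨j, hj⟩ := Set.mem_iUnion.mp this
      by_cases hj0 : j = i0
      · exact hj0 ▸ hj
      · exact absurd ⟨j, by simp [hw, hj0, hj]⟩ hx
  set t : Fin n → Set X := fun i => if i = i0 then (⋃ j, v j)ᶜ else u i with ht
  have hvsub : ∀ j, j ≠ i0 → t j = u j := fun j hj => by simp [ht, hj]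
  have hvt : ∀ j, v j ⊆ t j := by
    intro j
    by_cases hj : j = i0 <;> simp [hv, ht, hj]
  have htmeas : ∀ i, MeasurableSet[S] (t i) := by
    intro i
    simp only [ht]
    split_ifs
    · refine (MeasurableSet.iUnion fun j => ?_).compl
      by_cases hj : j = i0
      · simp [hv, hj]
      · simpa [hv, hj] using humeas j
    · exact humeas i
  have htdisj : Pairwise (Function.onFun Disjoint t) := by
    intro i j hij
    unfold Function.onFun
    by_cases hi : i = i0
    · subst hi
      have hj : j ≠ i0 := fun h => hij h.symm
      rw [hvsub j hj]
      simp only [ht, if_pos rfl]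
      refine Set.disjoint_left.mpr fun x hx hxj => ?_
      exact hx (Set.mem_iUnion.mpr ⟨j, by simp [hv, hj]; exact hxj⟩)
    · by_cases hj : j = i0
      · subst hj
        rw [hvsub i hi]
        simp only [ht, if_pos rfl]
        refine Set.disjoint_right.mpr fun x hx hxi => ?_
        exact hx (Set.mem_iUnion.mpr ⟨i, by simp [hv, hi]; exact hxi⟩)
      · rw [hvsub i hi, hvsub j hj]
        exact hudisj i j hij
  have htcover : (⋃ i, t i) = Set.univ := by
    apply Set.eq_univ_of_forall
    intro x
    by_cases hx : x ∈ ⋃ j, v j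
    · obtain ⟨j, hj⟩ := Set.mem_iUnion.mp hx
      exact Set.mem_iUnion.mpr ⟨j, hvt j hj⟩
    · exact Set.mem_iUnion.mpr ⟨i0, by simp only [ht, if_pos rfl]; exact hx⟩
  have hkey : ∀ i, μ (symmDiff (t i) (A i)) ≤ μ U := by
    intro i
    by_cases hi : i = i0
    · subst hi
      have h1 : symmDiff (t i0) (A i0) = symmDiff (⋃ j, v j) (⋃ j, w j) := by
        rw [hA0]
        simp only [ht, if_pos rfl]
        rw [compl_symmDiff_compl]
      rw [h1]
      refine measure_mono ((symmDiff_iUnion_subset' v w).trans ?_)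
      apply Set.iUnion_subset
      intro j
      by_cases hj : j = i0
      · simp [hv, hw, hj]
      · simp only [hv, hw, if_neg hj]
        exact huA j
    · rw [hvsub i hi]
      exact measure_mono (huA i)
  have hUbound : μ U ≤ n * ENNReal.ofReal δ := by
    calc μ U ≤ ∑ k, μ (symmDiff (B k) (A k)) := measure_iUnion_fintype_le μ _
      _ ≤ ∑ _k : Fin n, ENNReal.ofReal δ := Finset.sum_le_sum fun k _ => (hBc k).le
      _ = n * ENNReal.ofReal δ := by
          rw [Finset.sum_const, Finset.card_univ, Fintype.card_fin, nsmul_eq_mul]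
  refine ⟨t, htmeas, htdisj, htcover, ?_⟩
  intro J
  have hfin : μ (symmDiff (⋃ i ∈ J, t i) (⋃ i ∈ J, A i)) < ENNReal.ofReal ε := by
    calc μ (symmDiff (⋃ i ∈ J, t i) (⋃ i ∈ J, A i))
        ≤ μ (⋃ i ∈ J, symmDiff (t i) (A i)) := measure_mono (symmDiff_biUnion_subset' J t A)
      _ ≤ ∑ i ∈ J, μ (symmDiff (t i) (A i)) := measure_biUnion_finset_le J _
      _ ≤ ∑ _i ∈ J, μ U := Finset.sum_le_sum fun i _ => hkey i
      _ = J.card * μ U := by rw [Finset.sum_const, nsmul_eq_mul]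
      _ ≤ n * μ U := by
          gcongr
          exact_mod_cast (J.card_le_univ.trans_eq (by simp))
      _ ≤ n * (n * ENNReal.ofReal δ) := mul_le_mul_right hUbound _
      _ < ENNReal.ofReal ε := by
          rw [← ENNReal.ofReal_natCast n, ← ENNReal.ofReal_mul (by positivity),
            ← ENNReal.ofReal_mul (by positivity)]
          rw [ENNReal.ofReal_lt_ofReal_iff hε]
          rw [hδdef]
          have h1 : (n : ℝ) * ((n : ℝ) * (ε / ((n:ℝ) ^ 2 + 1))) = (n:ℝ)^2 * ε / ((n:ℝ)^2 + 1) := by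
            ring
          rw [h1, div_lt_iff₀ (by positivity)]
          nlinarith [sq_nonneg (n:ℝ)]
  rw [← ENNReal.lt_ofReal_iff_toReal_lt (measure_ne_top μ _)]
  exact hfin
end

section
/- Let (X, B, μ) be a probability space, ξ a finite measurable partition of X, d ∈ ℕ, and δ, ε > 0 chosen so that any ordered partition γ = {C_1,…,C_n} of {1,…,d} with Σ_i |μ(B_i) − |C_i|/d| < δ satisfies |H_μ(ξ) − H_ζ(γ)| < ε (where ξ = {B_1,…,B_n} and ζ is uniform measure on {1,…,d}, and H denotes Shannon entropy of a partition). Then for all sufficiently large d the number of Boolean algebra homomorphisms φ : Σ(ξ) → P({1,…,d}) with Σ_i |ζ(φ(B_i)) − μ(B_i)| < δ is at most (2δd+1)^n e^{d(1+ε)(H_μ(ξ)+ε)}. -/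
open MeasureTheory Finset

lemma aux_count {n d : ℕ} [Nonempty (Fin n)] (q : Fin n → ℝ) (hq : ∀ i, 0 ≤ q i)
    (hsum : ∑ i, q i = 1) (k : Fin n → ℕ)
    (Tk : Finset (Fin n → Set (Fin d)))
    (hTk : ∀ C ∈ Tk, Pairwise (Function.onFun Disjoint C) ∧ (⋃ i, C i) = Set.univ ∧
      ∀ i, (C i).ncard = k i) :
    (Tk.card : ℝ) * ∏ i, q i ^ k i ≤ 1 := by
  classical
  set ψ : (Fin n → Set (Fin d)) → (Fin d → Fin n) := fun C x =>
    if h : ∃ i, x ∈ C i then h.choose else Classical.arbitrary _ with hψ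
  have key : ∀ C ∈ Tk, ∀ x i, x ∈ C i ↔ ψ C x = i := by
    intro C hC x i
    obtain ⟨hd, hc, _⟩ := hTk C hC
    constructor
    · intro hx
      have h : ∃ j, x ∈ C j := ⟨i, hx⟩
      simp only [hψ, dif_pos h]
      by_contra hne
      exact Set.disjoint_left.mp (hd hne) h.choose_spec hx
    · intro hx
      have h : ∃ j, x ∈ C j := by
        have : x ∈ ⋃ j, C j := hc ▸ Set.mem_univ x
        simpa using this
      simp only [hψ, dif_pos h] at hx
      exact hx ▸ h.choose_spec
  have hinj : Set.InjOn ψ Tk := by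
    intro C hC C' hC' h
    funext i
    ext x
    rw [key C hC x i, key C' hC' x i, h]
  have hprod : ∀ C ∈ Tk, ∏ x : Fin d, q (ψ C x) = ∏ i, q i ^ k i := by
    intro C hC
    rw [← Finset.prod_fiberwise_of_maps_to (t := univ) (g := ψ C)
      (fun x _ => mem_univ _) (fun x => q (ψ C x))]
    refine Finset.prod_congr rfl fun j _ => ?_
    have hfilt : (univ.filter fun x => ψ C x = j) = (C j).toFinset := by
      ext x
      simp [key C hC x j]
    calc (∏ x ∈ univ.filter fun x => ψ C x = j, q (ψ C x))
        = ∏ x ∈ univ.filter fun x => ψ C x = j, q j := by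
          refine Finset.prod_congr rfl fun x hx => ?_
          rw [(mem_filter.mp hx).2]
      _ = q j ^ (C j).ncard := by
          rw [Finset.prod_const, hfilt, Set.ncard_eq_toFinset_card']
      _ = q j ^ k j := by rw [(hTk C hC).2.2 j]
  calc (Tk.card : ℝ) * ∏ i, q i ^ k i
      = ∑ C ∈ Tk, ∏ x : Fin d, q (ψ C x) := by
        rw [Finset.sum_congr rfl hprod, Finset.sum_const, nsmul_eq_mul]
    _ = ∑ f ∈ Tk.image ψ, ∏ x : Fin d, q (f x) := by
        rw [Finset.sum_image (fun C hC C' hC' h => hinj hC hC' h)]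
    _ ≤ ∑ f : Fin d → Fin n, ∏ x : Fin d, q (f x) := by
        refine Finset.sum_le_sum_of_subset_of_nonneg (subset_univ _) fun f _ _ => ?_
        exact Finset.prod_nonneg fun x _ => hq _
    _ = (∑ i, q i) ^ d := by
        rw [← Fintype.piFinset_univ, ← Finset.prod_univ_sum (fun _ : Fin d => univ)
          (fun _ i => q i), Finset.prod_const, Finset.card_univ, Fintype.card_fin]
    _ = 1 := by rw [hsum, one_pow]

/-- Let `(X,B,μ)` be a probability space, `ξ = {B 0,…,B (n-1)}` a finite
measurable partition, and `δ, ε > 0` chosen so that every ordered partition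
`C = {C 0,…,C (n-1)}` of `{1,…,d}` (for any `d`) with `∑ i, |μ(B i) - |C i|/d| < δ`
satisfies `|H_μ(ξ) - H_ζ(C)| < ε`.  Then for all sufficiently large `d` the number of
Boolean algebra homomorphisms `φ : Σ(ξ) → P({1,…,d})` (equivalently, ordered partitions
`(φ(B 0),…,φ(B (n-1)))` of `{1,…,d}`) with `∑ i, |ζ(φ(B i)) - μ(B i)| < δ` is at most
`(2δd+1)^n e^{d(1+ε)(H_μ(ξ)+ε)}`. -/
theorem stmt10 {X : Type*} [MeasurableSpace X] (μ : Measure X) [IsProbabilityMeasure μ]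
    {n : ℕ} (B : Fin n → Set X)
    (hmeas : ∀ i, MeasurableSet (B i))
    (hdisj : Pairwise (Function.onFun Disjoint B))
    (hcover : (⋃ i, B i) = Set.univ)
    (δ ε : ℝ) (hδ : 0 < δ) (hε : 0 < ε)
    (hcont : ∀ (d : ℕ) (C : Fin n → Set (Fin d)),
      Pairwise (Function.onFun Disjoint C) → (⋃ i, C i) = Set.univ →
      (∑ i, |(μ (B i)).toReal - ((C i).ncard : ℝ) / d| < δ) →
      |(-∑ i, (μ (B i)).toReal * Real.log (μ (B i)).toReal)
        - (-∑ i, ((C i).ncard : ℝ) / d * Real.log (((C i).ncard : ℝ) / d))| < ε) :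
    ∃ d₀ : ℕ, ∀ d ≥ d₀,
      ({C : Fin n → Set (Fin d) |
          Pairwise (Function.onFun Disjoint C) ∧ (⋃ i, C i) = Set.univ ∧
          ∑ i, |((C i).ncard : ℝ) / d - (μ (B i)).toReal| < δ}.ncard : ℝ)
        ≤ (2 * δ * d + 1) ^ n *
          Real.exp ((d : ℝ) * (1 + ε) *
            ((-∑ i, (μ (B i)).toReal * Real.log (μ (B i)).toReal) + ε)) := by
  classical
  set p : Fin n → ℝ := fun i => (μ (B i)).toReal with hp
  have hp0 : ∀ i, 0 ≤ p i := fun i => ENNReal.toReal_nonneg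
  have hp1 : ∀ i, p i ≤ 1 := fun i => by
    have : μ (B i) ≤ 1 := prob_le_one
    simpa [hp] using ENNReal.toReal_le_of_le_ofReal zero_le_one (by simpa using this)
  set H : ℝ := -∑ i, p i * Real.log (p i) with hH
  have hH0 : 0 ≤ H := by
    rw [hH, neg_nonneg]
    refine Finset.sum_nonpos fun i _ => ?_
    exact mul_nonpos_of_nonneg_of_nonpos (hp0 i) (Real.log_nonpos (hp0 i) (hp1 i))
  have hHε : 0 < H + ε := by linarith
  refine ⟨1, fun d hd => ?_⟩
  have hd0 : (0:ℝ) < d := by exact_mod_cast hd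
  set E : ℝ := Real.exp ((d : ℝ) * (1 + ε) * (H + ε)) with hE
  have hE0 : 0 < E := Real.exp_pos _
  set S := {C : Fin n → Set (Fin d) |
      Pairwise (Function.onFun Disjoint C) ∧ (⋃ i, C i) = Set.univ ∧
      ∑ i, |((C i).ncard : ℝ) / d - p i| < δ} with hS
  have hSfin : S.Finite := Set.toFinite S
  set T : Finset (Fin n → Set (Fin d)) := hSfin.toFinset with hT
  have hmemT : ∀ C, C ∈ T ↔ (Pairwise (Function.onFun Disjoint C) ∧ (⋃ i, C i) = Set.univ ∧
      ∑ i, |((C i).ncard : ℝ) / d - p i| < δ) := by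
    intro C; rw [hT, Set.Finite.mem_toFinset]; rfl
  -- the index box
  set Ki : Fin n → Finset ℕ := fun i =>
    (Finset.range (d+1)).filter (fun m => |(m:ℝ)/d - p i| < δ) with hKi
  set K : Finset (Fin n → ℕ) := Fintype.piFinset Ki with hK
  have hmapsto : ∀ C ∈ T, (fun i => (C i).ncard) ∈ K := by
    intro C hC
    obtain ⟨hdis, hcov, hsc⟩ := (hmemT C).mp hC
    rw [hK, Fintype.mem_piFinset]
    intro i
    rw [hKi]
    refine mem_filter.mpr ⟨mem_range.mpr ?_, ?_⟩
    · have h1 : (C i).ncard ≤ (Set.univ : Set (Fin d)).ncard :=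
        Set.ncard_le_ncard (Set.subset_univ _) (Set.toFinite _)
      have h2 : (Set.univ : Set (Fin d)).ncard = d := by
        simp [Set.ncard_univ]
      omega
    · refine lt_of_le_of_lt ?_ hsc
      exact Finset.single_le_sum (f := fun j => |((C j).ncard : ℝ) / d - p j|)
        (fun j _ => abs_nonneg _) (mem_univ i)
  -- cardinality of the box
  have hKcard : (K.card : ℝ) ≤ (2 * δ * d + 1) ^ n := by
    have hKic : ∀ i, ((Ki i).card : ℝ) ≤ 2 * δ * d + 1 := by
      intro i
      set a : ℕ := ⌈(d:ℝ) * (p i - δ)⌉₊ with ha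
      set b : ℕ := ⌊(d:ℝ) * (p i + δ)⌋₊ with hb
      have hsub : Ki i ⊆ Finset.Icc a b := by
        intro m hm
        rw [hKi, mem_filter] at hm
        obtain ⟨-, habs⟩ := hm
        obtain ⟨h1, h2⟩ := abs_lt.mp habs
        have hL : (d:ℝ) * (p i - δ) < m := by
          have h3 : p i - δ < (m:ℝ)/d := by linarith
          have h4 := (lt_div_iff₀ hd0).mp h3
          nlinarith
        have hU : (m:ℝ) < (d:ℝ) * (p i + δ) := by
          have hm2 : (m:ℝ)/d < p i + δ := by linarith
          calc (m:ℝ) = ((m:ℝ)/d) * d := by field_simp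
            _ < (p i + δ) * d := by exact mul_lt_mul_of_pos_right hm2 hd0
            _ = (d:ℝ) * (p i + δ) := by ring
        exact mem_Icc.mpr ⟨Nat.ceil_le.mpr hL.le, Nat.le_floor hU.le⟩
      have hcardle := Finset.card_le_card hsub
      have hU0 : (0:ℝ) ≤ (d:ℝ) * (p i + δ) := by nlinarith [hp0 i]
      rcases le_or_gt a (b + 1) with hab | hab
      · have hceil : (d:ℝ) * (p i - δ) ≤ a := Nat.le_ceil _
        have hfloor : (b:ℝ) ≤ (d:ℝ) * (p i + δ) := Nat.floor_le hU0
        calc ((Ki i).card : ℝ) ≤ ((Finset.Icc a b).card : ℝ) := by exact_mod_cast hcardle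
          _ = ((b + 1 - a : ℕ) : ℝ) := by rw [Nat.card_Icc]
          _ = (b:ℝ) + 1 - a := by
              rw [Nat.cast_sub hab]; push_cast; ring
          _ ≤ 2 * δ * d + 1 := by nlinarith
      · have : Finset.Icc a b = ∅ := by
          apply Finset.Icc_eq_empty
          omega
        rw [this] at hcardle
        simp only [Finset.card_empty, Nat.le_zero] at hcardle
        rw [hcardle]
        push_cast
        nlinarith
    rw [hK, Fintype.card_piFinset]
    push_cast
    calc (∏ i, ((Ki i).card : ℝ)) ≤ ∏ _i : Fin n, (2 * δ * d + 1) :=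
        Finset.prod_le_prod (fun i _ => by positivity) (fun i _ => hKic i)
      _ = (2 * δ * d + 1) ^ n := by
        rw [Finset.prod_const, Finset.card_univ, Fintype.card_fin]
  -- fiberwise bound
  have hfiber : ∀ k ∈ K,
      (((T.filter fun C => (fun i => (C i).ncard) = k).card : ℝ)) ≤ E := by
    intro k hk
    set Tk := T.filter fun C => (fun i => (C i).ncard) = k with hTk
    rcases Tk.eq_empty_or_nonempty with hemp | ⟨C₀, hC₀⟩
    · rw [hemp]; simpa using hE0.le
    · obtain ⟨hC₀T, hC₀k⟩ := mem_filter.mp hC₀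
      obtain ⟨hdis, hcov, hsc⟩ := (hmemT C₀).mp hC₀T
      have hszk : ∀ i, (C₀ i).ncard = k i := fun i => congrFun hC₀k i
      have hnn : Nonempty (Fin n) := by
        have hx : (0 : ℕ) < d := hd
        obtain ⟨j, -⟩ : ∃ j, (⟨0, hx⟩ : Fin d) ∈ C₀ j := by
          have : (⟨0, hx⟩ : Fin d) ∈ ⋃ i, C₀ i := hcov ▸ Set.mem_univ _
          simpa using this
        exact ⟨j⟩
      set q : Fin n → ℝ := fun i => (k i : ℝ) / d with hq
      have hq0 : ∀ i, 0 ≤ q i := fun i => by positivity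
      -- sum of sizes is d
      have hkd : ∑ i, k i = d := by
        have hbu : (Finset.univ : Finset (Fin d)) =
            Finset.univ.biUnion (fun i => (C₀ i).toFinset) := by
          ext x
          simp only [mem_univ, true_iff, Finset.mem_biUnion, Set.mem_toFinset]
          have : x ∈ ⋃ i, C₀ i := hcov ▸ Set.mem_univ x
          simpa using this
        have hcardbu := congrArg Finset.card hbu
        rw [Finset.card_biUnion (fun i _ j _ hij => by
          simpa [Set.disjoint_toFinset] using hdis hij)] at hcardbu
        rw [Finset.card_univ, Fintype.card_fin] at hcardbu
        rw [hcardbu]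
        refine Finset.sum_congr rfl fun i _ => ?_
        rw [← hszk i, Set.ncard_eq_toFinset_card']
      have hqsum : ∑ i, q i = 1 := by
        simp only [hq]
        rw [← Finset.sum_div, ← Nat.cast_sum, hkd]
        field_simp
      -- entropy bound from hcont
      have hclose : ∑ i, |p i - ((C₀ i).ncard : ℝ) / d| < δ := by
        refine lt_of_le_of_lt (le_of_eq ?_) hsc
        exact Finset.sum_congr rfl fun i _ => abs_sub_comm _ _
      have hent := hcont d C₀ hdis hcov hclose
      have hHq : (-∑ i, q i * Real.log (q i)) < H + ε := by
        have h1 := (abs_lt.mp hent).1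
        have heq : (∑ i, ((C₀ i).ncard : ℝ) / d * Real.log (((C₀ i).ncard : ℝ) / d))
            = ∑ i, q i * Real.log (q i) := by
          refine Finset.sum_congr rfl fun i _ => by rw [hszk i]
        rw [hH]
        rw [heq] at h1
        linarith
      -- counting bound
      have hcount := aux_count q hq0 hqsum k Tk (by
        intro C hC
        obtain ⟨hCT, hCk⟩ := mem_filter.mp hC
        obtain ⟨h1, h2, -⟩ := (hmemT C).mp hCT
        exact ⟨h1, h2, fun i => congrFun hCk i⟩)
      have hprodpos : 0 < ∏ i, q i ^ k i := by
        refine Finset.prod_pos fun i _ => ?_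
        rcases Nat.eq_zero_or_pos (k i) with h | h
        · simp [h]
        · have : (0:ℝ) < (k i : ℝ) := by exact_mod_cast h
          exact pow_pos (by rw [hq]; positivity) _
      have hexp : ∏ i, q i ^ k i = Real.exp (∑ i, (k i : ℝ) * Real.log (q i)) := by
        rw [Real.exp_sum]
        refine Finset.prod_congr rfl fun i _ => ?_
        rcases Nat.eq_zero_or_pos (k i) with h | h
        · simp [h]
        · have hqi : (0:ℝ) < q i := by
            have : (0:ℝ) < (k i : ℝ) := by exact_mod_cast h
            rw [hq]; positivity
          rw [Real.exp_nat_mul, Real.exp_log hqi]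
      have hdHq : ∑ i, (k i : ℝ) * Real.log (q i) = (d:ℝ) * (∑ i, q i * Real.log (q i)) := by
        rw [Finset.mul_sum]
        refine Finset.sum_congr rfl fun i _ => ?_
        rw [hq]
        field_simp
      have h1 : (Tk.card : ℝ) ≤ (∏ i, q i ^ k i)⁻¹ := by
        rw [← one_div]
        exact (le_div_iff₀ hprodpos).mpr hcount
      have h2 : (∏ i, q i ^ k i)⁻¹ = Real.exp ((d:ℝ) * (-∑ i, q i * Real.log (q i))) := by
        rw [hexp, ← Real.exp_neg, hdHq, mul_neg]
      calc (Tk.card : ℝ) ≤ Real.exp ((d:ℝ) * (-∑ i, q i * Real.log (q i))) := h2 ▸ h1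
        _ ≤ Real.exp ((d:ℝ) * (H + ε)) :=
            Real.exp_le_exp.mpr (mul_le_mul_of_nonneg_left hHq.le hd0.le)
        _ ≤ E := by
            rw [hE]
            refine Real.exp_le_exp.mpr ?_
            nlinarith [mul_nonneg (mul_nonneg hd0.le hε.le) hHε.le]
  -- assemble
  have hTcard : T.card = ∑ k ∈ K, (T.filter fun C => (fun i => (C i).ncard) = k).card :=
    Finset.card_eq_sum_card_fiberwise hmapsto
  have hmain : (T.card : ℝ) ≤ (2 * δ * d + 1) ^ n * E := by
    calc (T.card : ℝ) = ∑ k ∈ K, ((T.filter fun C => (fun i => (C i).ncard) = k).card : ℝ) := by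
          rw [hTcard]; push_cast; ring
      _ ≤ ∑ _k ∈ K, E := Finset.sum_le_sum hfiber
      _ = K.card * E := by rw [Finset.sum_const, nsmul_eq_mul]
      _ ≤ (2 * δ * d + 1) ^ n * E := mul_le_mul_of_nonneg_right hKcard hE0.le
  have hncard : S.ncard = T.card := Set.ncard_eq_toFinset_card S hSfin
  rw [hncard]
  exact hmain
end

section
/- Let (X, B, μ) be a probability space with a measure-preserving action of a countable sofic group G, and let Σ be a sofic approximation sequence for G. For finite measurable partitions α ≥ ξ of X, the sofic entropy quantities satisfy h_{Σ,μ}^ξ(α) ≤ H_μ(ξ), where H_μ(ξ) is the Shannon entropy of ξ. -/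
open MeasureTheory Filter Finset Pointwise

section Defs

variable {G : Type*} [Group G] [DecidableEq G]
variable {X : Type*} [MeasurableSpace X] [MulAction G X]

/-- A finite measurable partition of `X`, indexed by `Fin n`. -/
def IsFinPartition {n : ℕ} (P : Fin n → Set X) : Prop :=
  (∀ i, MeasurableSet (P i)) ∧ Pairwise (Function.onFun Disjoint P) ∧ (⋃ i, P i) = Set.univ

/-- `A` refines `P` via the index map `r` (each atom of `A` is contained in an atom of `P`). -/
def PartRefines {X : Type*} {m n : ℕ} (A : Fin m → Set X) (P : Fin n → Set X)
    (r : Fin m → Fin n) : Prop :=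
  ∀ i, A i ⊆ P (r i)

/-- The uniform probability measure `ζ` of a subset of `{1,…,d}`. -/
noncomputable def unif {d : ℕ} (S : Set (Fin d)) : ℝ := S.ncard / d

/-- The cell `⋂_{s∈F} s A_{f(s)}` of the join partition `α_F`. -/
def cellF {m : ℕ} (A : Fin m → Set X) (F : Finset G) (f : {s // s ∈ F} → Fin m) : Set X :=
  ⋂ s : {s // s ∈ F}, (s : G) • A (f s)

/-- Given the values `φ f` of a homomorphism on the cells of `α_F` (indexed by functions
`G → Fin m`, depending only on the restriction to `F`), the image `φ(s A_i)`. -/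
def sBlock {m d : ℕ} (φ : (G → Fin m) → Set (Fin d)) (s : G) (i : Fin m) : Set (Fin d) :=
  ⋃ f ∈ {f : G → Fin m | f s = i}, φ f

/-- The image under `φ` of the cell of `α_F` determined by `f : F → Fin m`. -/
def cellBlock {m d : ℕ} (φ : (G → Fin m) → Set (Fin d)) (F : Finset G)
    (f : {s // s ∈ F} → Fin m) : Set (Fin d) :=
  ⋃ g ∈ {g : G → Fin m | ∀ s : {s // s ∈ F}, g (s : G) = f s}, φ g

/-- `φ ∈ Hom_μ(α, F, δ, σ)`: `φ` is (the atom data of) a Boolean algebra homomorphism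
`Σ(α_F) → P({1,…,d})` which is approximately equivariant and approximately
measure-preserving to within `δ`. -/
def IsHom (μ : Measure X) {m : ℕ} (A : Fin m → Set X) (F : Finset G) (δ : ℝ)
    {d : ℕ} (σ : G → Equiv.Perm (Fin d)) (φ : (G → Fin m) → Set (Fin d)) : Prop :=
  (∀ f g : G → Fin m, (∀ s ∈ F, f s = g s) → φ f = φ g) ∧
  (∀ f g : G → Fin m, (∃ s ∈ F, f s ≠ g s) → Disjoint (φ f) (φ g)) ∧
  (⋃ f, φ f) = Set.univ ∧
  (∀ s ∈ F, ∑ i : Fin m,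
      unif (symmDiff ((σ s) '' sBlock φ 1 i) (sBlock φ s i)) < δ) ∧
  (∑ f : {s // s ∈ F} → Fin m,
      |unif (cellBlock φ F f) - (μ (cellF A F f)).toReal| < δ)

/-- The restriction of `φ` to the coarser partition `ξ`, along the refinement map `r`. -/
def restrictHom {m n d : ℕ} (r : Fin m → Fin n) (φ : (G → Fin m) → Set (Fin d)) :
    Fin n → Set (Fin d) :=
  fun j => ⋃ f ∈ {f : G → Fin m | r (f 1) = j}, φ f

/-- `|Hom_μ(α,F,δ,σ)|_ξ`: the number of restrictions to `ξ` of elements of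
`Hom_μ(α,F,δ,σ)`. -/
noncomputable def homCount (μ : Measure X) {m n : ℕ} (A : Fin m → Set X) (r : Fin m → Fin n)
    (F : Finset G) (δ : ℝ) {d : ℕ} (σ : G → Equiv.Perm (Fin d)) : ℕ :=
  (restrictHom r '' {φ | IsHom μ A F δ σ φ}).ncard

/-- `h_{Σ,μ}^ξ(α,F,δ)`. -/
noncomputable def hFδ (μ : Measure X) {m n : ℕ} (A : Fin m → Set X) (r : Fin m → Fin n)
    (F : Finset G) (δ : ℝ) (d : ℕ → ℕ) (σ : ∀ i, G → Equiv.Perm (Fin (d i))) : ℝ :=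
  limsup (fun i => Real.log (homCount μ A r F δ (σ i)) / d i) atTop

/-- `h_{Σ,μ}^ξ(α) = inf_F inf_δ h_{Σ,μ}^ξ(α,F,δ)`, the infimum over nonempty finite
`F ⊆ G` (containing the identity, so that `α ⊆ Σ(α_F)`) and `δ > 0`. -/
noncomputable def hPartLoc (μ : Measure X) {m n : ℕ} (A : Fin m → Set X) (r : Fin m → Fin n)
    (d : ℕ → ℕ) (σ : ∀ i, G → Equiv.Perm (Fin (d i))) : ℝ :=
  sInf { x | ∃ (F : Finset G) (δ : ℝ), (1 : G) ∈ F ∧ 0 < δ ∧ x = hFδ μ A r F δ d σ }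

/-- `h_{Σ,μ}^ξ(S)`: the infimum over finite partitions `α ⊆ S` refining `ξ`. -/
noncomputable def hXi (μ : Measure X) (S : Set (Set X)) {n : ℕ} (P : Fin n → Set X)
    (d : ℕ → ℕ) (σ : ∀ i, G → Equiv.Perm (Fin (d i))) : ℝ :=
  sInf { x | ∃ (m : ℕ) (A : Fin m → Set X) (r : Fin m → Fin n),
    IsFinPartition A ∧ (∀ i, A i ∈ S) ∧ PartRefines A P r ∧
    x = hPartLoc μ A r d σ }

/-- `h_{Σ,μ}(S)`: the supremum over finite partitions `ξ ⊆ S` of `h_{Σ,μ}^ξ(S)`. -/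
noncomputable def hAlg (μ : Measure X) (S : Set (Set X))
    (d : ℕ → ℕ) (σ : ∀ i, G → Equiv.Perm (Fin (d i))) : ℝ :=
  sSup { x | ∃ (n : ℕ) (P : Fin n → Set X),
    IsFinPartition P ∧ (∀ j, P j ∈ S) ∧ x = hXi μ S P d σ }

/-- `Σ = (σ i : G → Sym(d i))` is a sofic approximation sequence: asymptotically
multiplicative and free. -/
def IsSoficApprox {G : Type*} [Group G] (d : ℕ → ℕ)
    (σ : ∀ i, G → Equiv.Perm (Fin (d i))) : Prop :=
  (∀ s t : G, Tendsto (fun i =>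
      (({k : Fin (d i) | σ i (s * t) k = σ i s (σ i t k)}.ncard : ℝ)) / d i)
      atTop (nhds 1)) ∧
  (∀ s t : G, s ≠ t → Tendsto (fun i =>
      (({k : Fin (d i) | σ i s k ≠ σ i t k}.ncard : ℝ)) / d i)
      atTop (nhds 1))

/-- The Shannon entropy `H_μ(P)` of a finite partition. -/
noncomputable def shannonEnt (μ : Measure X) {n : ℕ} (P : Fin n → Set X) : ℝ :=
  -∑ i, (μ (P i)).toReal * Real.log (μ (P i)).toReal

end Defs

/-! Take `F = {1}`. An element of `Hom_μ(α, {1}, δ, σ)` is a labelling `a : [d] → α` whose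
empirical distribution is `δ`-close to `μ` on `α` in `ℓ¹`; its restriction to `ξ` is the
labelling `r ∘ a`, whose empirical distribution is then `δ`-close to `p = (μ(P_j))_j`. To count
such labellings `c : [d] → [n]`, mix `p` with the uniform distribution to get a positive `q`
with `log q` bounded; for `δ` small each such `c` has mass at least `exp(-d (H(p) + ε))` under
the product measure `q^{⊗d}`, so there are at most `exp(d (H(p) + ε))` of them. -/

section Counting

variable {ι κ : Type*} [Fintype κ]

theorem card_le_exp_of_forall_neg_sum_log_le [Fintype ι] {q : ι → ℝ} (hq0 : ∀ j, 0 < q j)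
    (hq1 : ∑ j, q j = 1) {C : ℝ} (S : Finset (κ → ι))
    (hS : ∀ c ∈ S, -∑ k, Real.log (q (c k)) ≤ C) :
    (#S : ℝ) ≤ Real.exp C := by
  classical
  have hprod : ∀ c ∈ S, Real.exp (-C) ≤ ∏ k, q (c k) := fun c hc => by
    rw [← Real.exp_log (prod_pos fun k _ => hq0 (c k)),
      Real.log_prod fun k _ => (hq0 (c k)).ne']
    exact Real.exp_le_exp.2 (by linarith [hS c hc])
  have htotal : ∑ c : κ → ι, ∏ k, q (c k) = 1 := by
    rw [← Fintype.prod_sum]; simp [hq1]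
  calc (#S : ℝ) = (∑ _c ∈ S, Real.exp (-C)) * Real.exp C := by
        rw [sum_const, nsmul_eq_mul, mul_assoc, ← Real.exp_add, neg_add_cancel, Real.exp_zero,
          mul_one]
    _ ≤ (∑ c ∈ S, ∏ k, q (c k)) * Real.exp C := by gcongr with c hc; exact hprod c hc
    _ ≤ (∑ c : κ → ι, ∏ k, q (c k)) * Real.exp C := by
        gcongr
        · exact fun c _ _ => prod_nonneg fun k _ => (hq0 (c k)).le
        · exact subset_univ S
    _ = Real.exp C := by rw [htotal, one_mul]

theorem ncard_preimage_singleton_eq_card [DecidableEq ι] (c : κ → ι) (j : ι) :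
    (c ⁻¹' {j}).ncard = #{k | c k = j} := by
  rw [← Set.ncard_coe_finset]; congr; ext; simp

theorem sum_comp_eq_sum_ncard_preimage_mul [Fintype ι] [DecidableEq ι] (c : κ → ι)
    (f : ι → ℝ) :
    ∑ k, f (c k) = ∑ j, ((c ⁻¹' {j}).ncard : ℝ) * f j := by
  rw [← sum_fiberwise' univ c f]
  refine sum_congr rfl fun j _ => ?_
  rw [sum_const, nsmul_eq_mul, ncard_preimage_singleton_eq_card]

theorem ncard_preimage_comp_singleton [Fintype ι] [DecidableEq ι] {γ : Type*} [DecidableEq γ]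
    (a : κ → ι) (r : ι → γ) (j : γ) :
    ((r ∘ a) ⁻¹' {j}).ncard = ∑ i ∈ univ with r i = j, (a ⁻¹' {i}).ncard := by
  simp only [ncard_preimage_singleton_eq_card (r ∘ a), ncard_preimage_singleton_eq_card a]
  rw [card_eq_sum_card_fiberwise (f := a) (t := univ.filter (r · = j))
    fun k hk => by simpa using hk]
  refine sum_congr rfl fun i hi => ?_
  congr 1; ext k
  simp only [mem_filter, mem_univ, true_and] at hi ⊢
  exact ⟨And.right, fun hk => ⟨by rw [Function.comp_apply, hk, hi], hk⟩⟩

theorem sum_abs_sum_fiberwise_le [Fintype ι] {γ : Type*} [Fintype γ] [DecidableEq γ]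
    (r : ι → γ) (g : ι → ℝ) :
    ∑ j, |∑ i ∈ univ with r i = j, g i| ≤ ∑ i, |g i| :=
  (sum_le_sum fun _ _ => abs_sum_le_sum_abs _ _).trans (sum_fiberwise univ r _).le

end Counting

theorem natCast_mul_unif {d : ℕ} (S : Set (Fin d)) : d * unif S = S.ncard := by
  rcases eq_or_ne d 0 with rfl | hd
  · simp [Set.eq_empty_of_isEmpty S]
  · rw [unif]; field_simp

section Entropy

variable {ι : Type*} [Fintype ι]

theorem neg_sum_mul_log_le_add_of_abs_log_le {p p' q : ι → ℝ} {L : ℝ}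
    (hL : ∀ j, |Real.log (q j)| ≤ L) :
    -∑ j, p' j * Real.log (q j) ≤
      -∑ j, p j * Real.log (q j) + (∑ j, |p' j - p j|) * L := by
  have h : ∑ j, (p j - p' j) * Real.log (q j) ≤ ∑ j, |p' j - p j| * L :=
    sum_le_sum fun j _ => by
      refine (le_abs_self _).trans ?_
      rw [abs_mul, abs_sub_comm]
      exact mul_le_mul_of_nonneg_left (hL j) (abs_nonneg _)
  simp only [sub_mul, sum_sub_distrib, ← sum_mul] at h
  linarith

theorem neg_sum_mul_log_mul_add_le {p : ι → ℝ} (hp0 : ∀ j, 0 ≤ p j) {a b : ℝ} (ha : 0 < a)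
    (hb : 0 ≤ b) :
    -∑ j, p j * Real.log (a * p j + b) ≤
      -∑ j, p j * Real.log (p j) - (∑ j, p j) * Real.log a := by
  have hterm : ∀ j, p j * Real.log (p j) + p j * Real.log a ≤ p j * Real.log (a * p j + b) := by
    intro j
    rcases (hp0 j).eq_or_lt with hpj | hpj
    · simp [← hpj]
    rw [← mul_add, ← Real.log_mul hpj.ne' ha.ne']
    exact mul_le_mul_of_nonneg_left
      (Real.log_le_log (by positivity) (by linarith [mul_comm (p j) a])) hpj.le
  have := sum_le_sum fun j (_ : j ∈ univ) => hterm j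
  rw [sum_add_distrib, ← sum_mul] at this
  linarith

theorem exists_pos_prob_neg_sum_mul_log_le {p : ι → ℝ} (hp0 : ∀ j, 0 ≤ p j)
    (hp1 : ∑ j, p j = 1) {ε : ℝ} (hε : 0 < ε) :
    ∃ q : ι → ℝ, (∀ j, 0 < q j) ∧ ∑ j, q j = 1 ∧ ∃ δ > 0, ∀ p' : ι → ℝ,
      ∑ j, |p' j - p j| ≤ δ → -∑ j, p' j * Real.log (q j) ≤ -∑ j, p j * Real.log (p j) + ε := by
  obtain ⟨j₀, -⟩ := nonempty_of_sum_ne_zero (hp1.trans_ne one_ne_zero)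
  have hN : (1 : ℝ) ≤ Fintype.card ι := by exact_mod_cast Fintype.card_pos_iff.2 ⟨j₀⟩
  set a := Real.exp (-(ε / 2))
  have ha0 : 0 < a := Real.exp_pos _
  have ha1 : a < 1 := Real.exp_lt_one_iff.2 (by linarith)
  set b := (1 - a) / Fintype.card ι
  have hb : 0 < b := div_pos (by linarith) (by linarith)
  set q : ι → ℝ := fun j => a * p j + b
  have hq0 : ∀ j, 0 < q j := fun j => add_pos_of_nonneg_of_pos (mul_nonneg ha0.le (hp0 j)) hb
  have hq1 : ∀ j, q j ≤ 1 := fun j => by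
    have : p j ≤ 1 := hp1 ▸ single_le_sum (fun i _ => hp0 i) (mem_univ j)
    have hb1 : b ≤ 1 - a := div_le_self (by linarith) hN
    show a * p j + b ≤ 1
    nlinarith
  set L := -Real.log b
  have hL : ∀ j, |Real.log (q j)| ≤ L := fun j => by
    rw [abs_of_nonpos (Real.log_nonpos (hq0 j).le (hq1 j)), neg_le_neg_iff]
    exact Real.log_le_log hb (by simp only [q]; linarith [mul_nonneg ha0.le (hp0 j)])
  have hL0 : 0 ≤ L := (abs_nonneg _).trans (hL j₀)
  refine ⟨q, hq0, ?_, ε / 2 / (L + 1), by positivity, fun p' hp' => ?_⟩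
  · simp only [q, sum_add_distrib, ← mul_sum, hp1, sum_const, card_univ, nsmul_eq_mul, b]
    field_simp; ring
  · have hmix := neg_sum_mul_log_mul_add_le hp0 ha0 hb.le
    rw [hp1, one_mul, Real.log_exp] at hmix
    have hδL : (∑ j, |p' j - p j|) * L ≤ ε / 2 := by
      calc (∑ j, |p' j - p j|) * L ≤ ε / 2 / (L + 1) * (L + 1) := by gcongr; linarith
        _ = ε / 2 := by field_simp
    linarith [neg_sum_mul_log_le_add_of_abs_log_le (p := p) (p' := p') hL]

end Entropy

theorem exists_ncard_typical_le_exp {n : ℕ} {p : Fin n → ℝ} (hp0 : ∀ j, 0 ≤ p j)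
    (hp1 : ∑ j, p j = 1) {ε : ℝ} (hε : 0 < ε) :
    ∃ δ > 0, ∀ d : ℕ, ({c : Fin d → Fin n | ∑ j, |unif (c ⁻¹' {j}) - p j| ≤ δ}.ncard : ℝ) ≤
      Real.exp (d * (-∑ j, p j * Real.log (p j) + ε)) := by
  obtain ⟨q, hq0, hq1, δ, hδ, hq⟩ := exists_pos_prob_neg_sum_mul_log_le hp0 hp1 hε
  refine ⟨δ, hδ, fun d => ?_⟩
  classical
  rw [Set.ncard_eq_toFinset_card']
  refine card_le_exp_of_forall_neg_sum_log_le hq0 hq1 _ fun c hc => ?_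
  rw [Set.mem_toFinset] at hc
  calc -∑ k, Real.log (q (c k)) = d * -∑ j, unif (c ⁻¹' {j}) * Real.log (q j) := by
        rw [sum_comp_eq_sum_ncard_preimage_mul c fun j => Real.log (q j), mul_neg, mul_sum]
        simp only [← natCast_mul_unif, mul_assoc]
    _ ≤ d * (-∑ j, p j * Real.log (p j) + ε) := by gcongr; exact hq _ hc

section SingletonHom

variable {G : Type*} [Group G] {m d : ℕ} {φ : (G → Fin m) → Set (Fin d)}

theorem restrictHom_eq_preimage {n : ℕ} (r : Fin m → Fin n) {a : Fin d → Fin m}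
    (ha : ∀ f, φ f = a ⁻¹' {f 1}) : restrictHom r φ = fun j => (r ∘ a) ⁻¹' {j} := by
  funext j; ext k
  simp only [restrictHom, ha, Set.mem_iUnion, Set.mem_preimage, Set.mem_singleton_iff,
    Function.comp_apply, exists_prop]
  constructor
  · rintro ⟨f, hf, hk⟩; rwa [hk]
  · intro hk; exact ⟨fun _ => a k, hk, rfl⟩

variable [DecidableEq G] {X : Type*} [MeasurableSpace X] [MulAction G X]
  {μ : Measure X} {A : Fin m → Set X} {δ : ℝ} {σ : G → Equiv.Perm (Fin d)}

theorem IsHom.exists_label (h : IsHom μ A {1} δ σ φ) :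
    ∃ a : Fin d → Fin m, ∀ f, φ f = a ⁻¹' {f 1} := by
  obtain ⟨hdep, hdisj, hcover, -, -⟩ := h
  have hmem : ∀ k, ∃ f, k ∈ φ f := fun k => Set.mem_iUnion.1 (hcover ▸ Set.mem_univ k)
  choose g hg using hmem
  refine ⟨fun k => g k 1, fun f => Set.ext fun k => ⟨fun hk => ?_, fun hk => ?_⟩⟩
  · by_contra hne
    exact Set.disjoint_left.1 (hdisj f (g k) ⟨1, mem_singleton_self 1, Ne.symm hne⟩) hk (hg k)
  · rw [hdep f (g k) (by simpa using hk.symm)]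
    exact hg k

theorem IsHom.sum_abs_unif_sub_lt (h : IsHom μ A {1} δ σ φ) {a : Fin d → Fin m}
    (ha : ∀ f, φ f = a ⁻¹' {f 1}) :
    ∑ i, |unif (a ⁻¹' {i}) - (μ (A i)).toReal| < δ := by
  have hcell : ∀ f : ({1} : Finset G) → Fin m,
      cellBlock φ {1} f = a ⁻¹' {f default} ∧ cellF A {1} f = A (f default) := by
    intro f
    have hdef : ((default : ({1} : Finset G)) : G) = 1 := mem_singleton.1 (Subtype.prop _)
    refine ⟨Set.ext fun k => ?_, (iInf_unique _).trans (by rw [hdef, one_smul])⟩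
    simp only [cellBlock, ha, Set.mem_iUnion, Set.mem_preimage, Set.mem_singleton_iff,
      exists_prop]
    constructor
    · rintro ⟨g, hg, hk⟩
      rw [hk, hg ⟨1, mem_singleton_self 1⟩]
      exact congrArg f (Subsingleton.elim _ _)
    · intro hk
      refine ⟨fun _ => a k, fun s => ?_, rfl⟩
      rw [hk]
      exact congrArg f (Subsingleton.elim _ _)
  calc ∑ i, |unif (a ⁻¹' {i}) - (μ (A i)).toReal|
      = ∑ f : ({1} : Finset G) → Fin m,
          |unif (cellBlock φ {1} f) - (μ (cellF A {1} f)).toReal| :=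
        Fintype.sum_equiv (Equiv.funUnique _ _).symm _ _ fun i => by
          simp [hcell]
    _ < δ := h.2.2.2.2

end SingletonHom

section Partitions

variable {X : Type*} [MeasurableSpace X] {m n : ℕ} {A : Fin m → Set X} {P : Fin n → Set X}

theorem IsFinPartition.sum_measure (μ : Measure X) (hP : IsFinPartition P) :
    ∑ j, μ (P j) = μ Set.univ := by
  rw [← hP.2.2, measure_iUnion hP.2.1 hP.1, tsum_fintype]

theorem PartRefines.measure_eq_sum (μ : Measure X) {r : Fin m → Fin n} (hr : PartRefines A P r)
    (hA : IsFinPartition A) (hP : Pairwise (Function.onFun Disjoint P)) (j : Fin n) :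
    μ (P j) = ∑ i ∈ univ with r i = j, μ (A i) := by
  have hPj : P j = ⋃ i ∈ univ.filter (r · = j), A i := by
    refine subset_antisymm (fun x hx => ?_) ?_
    · obtain ⟨i, hi⟩ := Set.mem_iUnion.1 (hA.2.2 ▸ Set.mem_univ x)
      have hri : r i = j := by
        by_contra hne
        exact Set.disjoint_left.1 (hP hne) (hr i hi) hx
      exact Set.mem_biUnion (by simpa using hri) hi
    · exact Set.iUnion₂_subset fun i hi => (mem_filter.1 hi).2 ▸ hr i
  rw [hPj, measure_biUnion_finset (fun i _ i' _ h => hA.2.1 h) fun i _ => hA.1 i]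

end Partitions

theorem shannonEnt_nonneg {X : Type*} [MeasurableSpace X] (μ : Measure X)
    [IsProbabilityMeasure μ] {n : ℕ} (P : Fin n → Set X) : 0 ≤ shannonEnt μ P := by
  rw [shannonEnt, ← sum_neg_distrib]
  exact sum_nonneg fun j _ => by
    simpa [Real.negMulLog, neg_mul] using
      Real.negMulLog_nonneg ENNReal.toReal_nonneg (measureReal_le_one (μ := μ) (s := P j))

section Entropies

variable {G : Type*} [Group G] [DecidableEq G] {X : Type*} [MeasurableSpace X] [MulAction G X]
  {μ : Measure X} {m n : ℕ} {A : Fin m → Set X} {P : Fin n → Set X} {r : Fin m → Fin n}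

theorem homCount_singleton_le [IsFiniteMeasure μ] (hA : IsFinPartition A)
    (hP : IsFinPartition P) (hr : PartRefines A P r) (δ : ℝ) {d : ℕ} (σ : G → Equiv.Perm (Fin d)) :
    homCount μ A r {1} δ σ ≤
      {c : Fin d → Fin n | ∑ j, |unif (c ⁻¹' {j}) - (μ (P j)).toReal| ≤ δ}.ncard := by
  refine (Set.ncard_le_ncard ?_ (Set.toFinite _)).trans
    (Set.ncard_image_le (f := fun c j => c ⁻¹' {j}) (Set.toFinite _))
  rintro _ ⟨φ, hφ, rfl⟩
  obtain ⟨a, ha⟩ := hφ.exists_label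
  refine ⟨r ∘ a, ?_, (restrictHom_eq_preimage r ha).symm⟩
  calc ∑ j, |unif ((r ∘ a) ⁻¹' {j}) - (μ (P j)).toReal|
      = ∑ j, |∑ i ∈ univ with r i = j, (unif (a ⁻¹' {i}) - (μ (A i)).toReal)| := by
        refine sum_congr rfl fun j _ => ?_
        rw [hr.measure_eq_sum μ hA hP.2.1, ENNReal.toReal_sum fun i _ => measure_ne_top μ _,
          sum_sub_distrib, unif, ncard_preimage_comp_singleton, Nat.cast_sum, sum_div]
        rfl
    _ ≤ ∑ i, |unif (a ⁻¹' {i}) - (μ (A i)).toReal| := sum_abs_sum_fiberwise_le r _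
    _ ≤ δ := (hφ.sum_abs_unif_sub_lt ha).le

theorem hFδ_nonneg (F : Finset G) (δ : ℝ) (d : ℕ → ℕ) (σ : ∀ i, G → Equiv.Perm (Fin (d i))) :
    0 ≤ hFδ μ A r F δ d σ := by
  -- a real `limsup` is an `sInf`, junk `0` when the sequence is unbounded
  rw [hFδ, limsup_eq]
  refine Real.sInf_nonneg fun b hb => ?_
  obtain ⟨i, hi⟩ := hb.exists
  exact (div_nonneg (Real.log_natCast_nonneg _) (Nat.cast_nonneg _)).trans hi

theorem hPartLoc_le_hFδ {F : Finset G} (hF : 1 ∈ F) {δ : ℝ} (hδ : 0 < δ) (d : ℕ → ℕ)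
    (σ : ∀ i, G → Equiv.Perm (Fin (d i))) : hPartLoc μ A r d σ ≤ hFδ μ A r F δ d σ :=
  csInf_le ⟨0, by rintro _ ⟨F', δ', -, -, rfl⟩; exact hFδ_nonneg F' δ' d σ⟩ ⟨F, δ, hF, hδ, rfl⟩

theorem hFδ_le_of_forall_le_exp {F : Finset G} {δ B : ℝ} (hB : 0 ≤ B) {d : ℕ → ℕ}
    {σ : ∀ i, G → Equiv.Perm (Fin (d i))}
    (h : ∀ i, (homCount μ A r F δ (σ i) : ℝ) ≤ Real.exp (d i * B)) :
    hFδ μ A r F δ d σ ≤ B := by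
  have hterm : ∀ i, Real.log (homCount μ A r F δ (σ i)) / d i ≤ B := fun i => by
    rcases (Nat.cast_nonneg (α := ℝ) (d i)).eq_or_lt with hd | hd
    · rwa [← hd, div_zero]
    rw [div_le_iff₀ hd, mul_comm]
    rcases (Nat.cast_nonneg (α := ℝ) (homCount μ A r F δ (σ i))).eq_or_lt with h0 | h0
    · rw [← h0, Real.log_zero]; positivity
    exact (Real.log_le_iff_le_exp h0).2 (h i)
  exact limsup_le_of_le (isCoboundedUnder_le_of_le atTop fun i =>
    div_nonneg (Real.log_natCast_nonneg _) (Nat.cast_nonneg _)) (Eventually.of_forall hterm)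

end Entropies

theorem stmt11_general {G : Type*} [Group G] [DecidableEq G]
    {X : Type*} [MeasurableSpace X] [MulAction G X]
    (μ : Measure X) [IsProbabilityMeasure μ]
    (dseq : ℕ → ℕ) (σ : ∀ i, G → Equiv.Perm (Fin (dseq i)))
    {n m : ℕ} (P : Fin n → Set X) (A : Fin m → Set X) (r : Fin m → Fin n)
    (hP : IsFinPartition P) (hA : IsFinPartition A) (hr : PartRefines A P r) :
    hPartLoc μ A r dseq σ ≤ shannonEnt μ P := by
  have hsum : ∑ j, (μ (P j)).toReal = 1 := by
    rw [← ENNReal.toReal_sum fun j _ => measure_ne_top μ _, hP.sum_measure μ, measure_univ,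
      ENNReal.toReal_one]
  refine le_of_forall_pos_le_add fun ε hε => ?_
  obtain ⟨δ, hδ, htypical⟩ :=
    exists_ncard_typical_le_exp (fun j => ENNReal.toReal_nonneg) hsum hε
  calc hPartLoc μ A r dseq σ ≤ hFδ μ A r {1} δ dseq σ :=
        hPartLoc_le_hFδ (mem_singleton_self 1) hδ _ _
    _ ≤ shannonEnt μ P + ε :=
      hFδ_le_of_forall_le_exp (by linarith [shannonEnt_nonneg μ P]) fun i =>
        (Nat.cast_le.2 (homCount_singleton_le hA hP hr δ (σ i))).trans (htypical (dseq i))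

/-- Lemma 4.1(i).  Let `(X,B,μ)` be a probability space with a
measure-preserving action of a countable sofic group `G`, and `Σ` a sofic approximation
sequence.  For finite measurable partitions `α ≥ ξ` of `X` (refinement witnessed by
`r`), the sofic entropy `h_{Σ,μ}^ξ(α)` is at most the Shannon entropy `H_μ(ξ)`. -/
theorem stmt11 {G : Type*} [Group G] [Countable G] [DecidableEq G]
    {X : Type*} [MeasurableSpace X] [MulAction G X]
    (μ : Measure X) [IsProbabilityMeasure μ]
    (hact : ∀ g : G, MeasurePreserving (fun x : X => g • x) μ μ)
    (dseq : ℕ → ℕ) (σ : ∀ i, G → Equiv.Perm (Fin (dseq i)))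
    (hσ : IsSoficApprox dseq σ)
    {n m : ℕ} (P : Fin n → Set X) (A : Fin m → Set X) (r : Fin m → Fin n)
    (hP : IsFinPartition P) (hA : IsFinPartition A) (hr : PartRefines A P r) :
    hPartLoc μ A r dseq σ ≤ shannonEnt μ P :=
  stmt11_general μ dseq σ P A r hP hA hr
end

section
/- Let (X, B, μ) be a probability space with a measure-preserving action of a countable sofic group G, and let Σ be a sofic approximation sequence. For finite measurable partitions α ≥ ξ of X, one has h_{Σ,μ}^ξ(α) ≥ h_{Σ,μ}^α(α) − H_μ(α|ξ), where H_μ(α|ξ) is the conditional Shannon entropy of α given ξ. -/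
open MeasureTheory Filter Finset Pointwise

/-
Restricting `φ ∈ Hom_μ(α,F,δ,σ)` to `α` gives an ordered partition of `{1,…,d}`, i.e. a
colouring `c : [d] → α` whose colour classes have at most `(μ(A_i)+δ)d` points, and its
restriction to `ξ` is the colouring `r ∘ c`. It therefore suffices to bound the number of such
colourings lying over a fixed colouring of `[d]` by `ξ`. Weight a colouring `c` by
`∏_k v(c k)`, where `v_i = w_i / ∑_{r i' = r i} w_{i'}` and `w_i = μ(A_i) + δ`: the colourings
over a fixed one have total weight at most `1`, while each one with the prescribed class sizes
has weight at least `exp(-d H_δ)`, `H_δ` being the conditional entropy of the weights `w` given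
`r`. Hence `|Hom|_α ≤ |Hom|_ξ exp(d H_δ)`, and as `δ → 0`, `H_δ → H_μ(α) - H_μ(ξ)`.
-/

namespace Sofic

open Real Function Topology

section Colorings

variable {ι κ α : Type*} [Fintype ι] [DecidableEq κ]

noncomputable def fiberWeight (r : ι → κ) (w : ι → ℝ) (j : κ) : ℝ := ∑ i with r i = j, w i

/-- The conditional entropy `H(w | r)` of the (unnormalised) weights `w` given the
coarsening `r`. -/
noncomputable def condEnt (r : ι → κ) (w : ι → ℝ) : ℝ :=
  ∑ i, w i * (log (fiberWeight r w (r i)) - log (w i))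

lemma le_fiberWeight {w : ι → ℝ} (hw : ∀ i, 0 ≤ w i) (r : ι → κ) (i : ι) :
    w i ≤ fiberWeight r w (r i) :=
  Finset.single_le_sum (fun i' _ => hw i') (by simp)

lemma condEnt_nonneg {w : ι → ℝ} (hw : ∀ i, 0 < w i) (r : ι → κ) : 0 ≤ condEnt r w :=
  Finset.sum_nonneg fun i _ => mul_nonneg (hw i).le <|
    sub_nonneg.2 (log_le_log (hw i) (le_fiberWeight (fun i => (hw i).le) r i))

lemma condEnt_eq_sub [Fintype κ] (r : ι → κ) (w : ι → ℝ) :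
    condEnt r w = ∑ i, negMulLog (w i) - ∑ j, negMulLog (fiberWeight r w j) := by
  have hfiber : ∑ i, w i * log (fiberWeight r w (r i))
      = ∑ j, fiberWeight r w j * log (fiberWeight r w j) := by
    rw [← Finset.sum_fiberwise Finset.univ r]
    refine Finset.sum_congr rfl fun j _ => ?_
    rw [fiberWeight, Finset.sum_mul]
    exact Finset.sum_congr rfl fun i hi => by rw [(Finset.mem_filter.1 hi).2, fiberWeight]
  simp only [condEnt, mul_sub, Finset.sum_sub_distrib, hfiber, negMulLog, neg_mul,
    Finset.sum_neg_distrib]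
  ring

lemma continuous_condEnt_add [Fintype κ] (r : ι → κ) (w : ι → ℝ) :
    Continuous fun t => condEnt r fun i => w i + t := by
  simp only [condEnt_eq_sub, fiberWeight]
  fun_prop

variable [Fintype α]

lemma sum_prod_weight_le_one [DecidableEq α] {w : ι → ℝ} (hw : ∀ i, 0 < w i) (r : ι → κ)
    (ρ : α → κ) :
    ∑ c : α → ι with r ∘ c = ρ, ∏ k, w (c k) / fiberWeight r w (r (c k)) ≤ 1 := by
  have hpi : ({c : α → ι | r ∘ c = ρ} : Finset (α → ι))
      = Fintype.piFinset fun k => {i | r i = ρ k} := by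
    ext c
    simp [funext_iff]
  rw [hpi]
  refine (Finset.prod_univ_sum (fun k => ({i | r i = ρ k} : Finset ι))
    fun _ i => w i / fiberWeight r w (r i)).symm.trans_le ?_
  refine Finset.prod_le_one (fun k _ => Finset.sum_nonneg fun i _ => ?_) fun k _ => ?_
  · exact div_nonneg (hw i).le (Finset.sum_nonneg fun i _ => (hw i).le)
  · calc ∑ i with r i = ρ k, w i / fiberWeight r w (r i)
        = fiberWeight r w (ρ k) / fiberWeight r w (ρ k) := by
          rw [fiberWeight, Finset.sum_div]
          exact Finset.sum_congr rfl fun i hi => by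
            rw [(Finset.mem_filter.1 hi).2, fiberWeight]
      _ ≤ 1 := div_self_le_one _

variable [DecidableEq ι]

lemma exp_neg_le_prod_weight {w : ι → ℝ} (hw : ∀ i, 0 < w i) (r : ι → κ) {c : α → ι}
    (hc : ∀ i, (#{k | c k = i} : ℝ) ≤ w i * Fintype.card α) :
    exp (-(Fintype.card α * condEnt r w))
      ≤ ∏ k, w (c k) / fiberWeight r w (r (c k)) := by
  set v : ι → ℝ := fun i => w i / fiberWeight r w (r i)
  have hN : ∀ i, w i ≤ fiberWeight r w (r i) := le_fiberWeight (fun i => (hw i).le) r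
  have hv : ∀ i, 0 < v i := fun i => div_pos (hw i) ((hw i).trans_le (hN i))
  have hlogv : ∀ i, log (v i) ≤ 0 := fun i =>
    log_nonpos (hv i).le (div_le_one_of_le₀ (hN i) ((hw i).le.trans (hN i)))
  have hprod : ∏ k, v (c k) = ∏ i, v i ^ #{k | c k = i} := by
    rw [← Finset.prod_fiberwise Finset.univ c]
    exact Finset.prod_congr rfl fun i _ =>
      (Finset.prod_congr rfl fun k hk => by rw [(Finset.mem_filter.1 hk).2]).trans
        (Finset.prod_const _)
  have hexp : -(Fintype.card α * condEnt r w) = ∑ i, w i * Fintype.card α * log (v i) := by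
    simp only [condEnt, v, Finset.mul_sum, ← Finset.sum_neg_distrib]
    refine Finset.sum_congr rfl fun i _ => ?_
    rw [log_div (hw i).ne' ((hw i).trans_le (hN i)).ne']
    ring
  change _ ≤ ∏ k, v (c k)
  rw [hprod, hexp, exp_sum]
  refine Finset.prod_le_prod (fun i _ => (exp_pos _).le) fun i _ => ?_
  calc exp (w i * Fintype.card α * log (v i))
      ≤ exp (#{k | c k = i} * log (v i)) :=
        exp_le_exp.2 (mul_le_mul_of_nonpos_right (hc i) (hlogv i))
    _ = v i ^ #{k | c k = i} := by rw [← log_pow, exp_log (pow_pos (hv i) _)]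

lemma card_fiber_le_exp_condEnt [DecidableEq α] {w : ι → ℝ} (hw : ∀ i, 0 < w i) (r : ι → κ)
    (ρ : α → κ) :
    (#{c : α → ι | r ∘ c = ρ ∧ ∀ i, (#{k | c k = i} : ℝ) ≤ w i * Fintype.card α} : ℝ)
      ≤ exp (Fintype.card α * condEnt r w) := by
  rw [← div_le_one (exp_pos _), div_eq_mul_inv, ← exp_neg]
  calc _ = ∑ c : α → ι with r ∘ c = ρ ∧ ∀ i, (#{k | c k = i} : ℝ) ≤ w i * Fintype.card α,
        exp (-(Fintype.card α * condEnt r w)) := by rw [Finset.sum_const, nsmul_eq_mul]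
    _ ≤ ∑ c : α → ι with r ∘ c = ρ ∧ ∀ i, (#{k | c k = i} : ℝ) ≤ w i * Fintype.card α,
        ∏ k, w (c k) / fiberWeight r w (r (c k)) :=
      Finset.sum_le_sum fun c hc => exp_neg_le_prod_weight hw r (Finset.mem_filter.1 hc).2.2
    _ ≤ ∑ c : α → ι with r ∘ c = ρ, ∏ k, w (c k) / fiberWeight r w (r (c k)) := by
      refine Finset.sum_le_sum_of_subset_of_nonneg
        (fun c hc => by simp only [Finset.mem_filter] at hc ⊢; exact ⟨hc.1, hc.2.1⟩)
        fun c _ _ => ?_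
      exact Finset.prod_nonneg fun k _ => div_nonneg (hw _).le
        ((hw _).le.trans (le_fiberWeight (fun i => (hw i).le) r _))
    _ ≤ 1 := sum_prod_weight_le_one hw r ρ

lemma ncard_le_ncard_image_comp_mul_exp {w : ι → ℝ} (hw : ∀ i, 0 < w i) (r : ι → κ)
    (S : Set (α → ι)) (hS : ∀ c ∈ S, ∀ i, (#{k | c k = i} : ℝ) ≤ w i * Fintype.card α) :
    (S.ncard : ℝ) ≤ ((r ∘ ·) '' S).ncard * exp (Fintype.card α * condEnt r w) := by
  classical
  rw [Set.ncard_eq_toFinset_card', Set.ncard_eq_toFinset_card', Set.toFinset_image,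
    Finset.card_eq_sum_card_image (r ∘ ·), Nat.cast_sum, ← nsmul_eq_mul]
  refine Finset.sum_le_card_nsmul _ _ _ fun ρ _ => le_trans ?_
    (card_fiber_le_exp_condEnt hw r ρ)
  refine Nat.cast_le.2 (Finset.card_le_card fun c hc => ?_)
  obtain ⟨hcS, hcρ⟩ := Finset.mem_filter.1 hc
  exact Finset.mem_filter.2 ⟨Finset.mem_univ _, hcρ, hS c (Set.mem_toFinset.1 hcS)⟩

end Colorings

section Partitions

variable {ι α : Type*}

lemma exists_eq_preimage_singleton {θ : ι → Set α} (hdisj : Pairwise (Disjoint on θ))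
    (hcover : ⋃ i, θ i = Set.univ) : ∃ c : α → ι, θ = fun i => c ⁻¹' {i} := by
  choose c hc using fun k => Set.mem_iUnion.1 (hcover ▸ Set.mem_univ k : k ∈ ⋃ i, θ i)
  refine ⟨c, funext fun i => Set.ext fun k => ⟨fun hk => ?_, fun hk => hk ▸ hc k⟩⟩
  by_contra hne
  exact Set.disjoint_left.1 (hdisj hne) (hc k) hk

lemma injective_preimage_singleton :
    Function.Injective fun (c : α → ι) (i : ι) => c ⁻¹' {i} := by
  intro c c' h
  funext k
  exact Eq.symm ((Set.ext_iff.1 (congrFun h (c k)) k).1 rfl)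

end Partitions

section Uniform

variable {d : ℕ}

lemma unif_biUnion {ι : Type*} (s : Finset ι) {S : ι → Set (Fin d)}
    (hS : (s : Set ι).PairwiseDisjoint S) :
    unif (⋃ i ∈ s, S i) = ∑ i ∈ s, unif (S i) := by
  rw [unif, ← Finset.set_biUnion_coe,
    Set.Finite.ncard_biUnion s.finite_toSet (fun _ _ => Set.toFinite _) hS, finsum_mem_coe_finset,
    Nat.cast_sum, Finset.sum_div]
  rfl

lemma card_fiber_le_of_unif_le {ι : Type*} [DecidableEq ι] {c : Fin d → ι} {i : ι} {x : ℝ}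
    (h : unif (c ⁻¹' {i}) ≤ x) :
    (#{k | c k = i} : ℝ) ≤ x * Fintype.card (Fin d) := by
  rw [Fintype.card_fin]
  rcases Nat.eq_zero_or_pos d with rfl | hd
  · simp
  rw [unif, div_le_iff₀ (by exact_mod_cast hd),
    show c ⁻¹' {i} = ↑({k | c k = i} : Finset (Fin d)) by ext; simp, Set.ncard_coe_finset] at h
  exact h

end Uniform

section Restriction

variable {G : Type*} [Group G] {m n d : ℕ} {F : Finset G}
  {φ : (G → Fin m) → Set (Fin d)}

lemma pairwise_disjoint_restrictHom_id (h1F : (1 : G) ∈ F)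
    (hφ : ∀ f g : G → Fin m, (∃ s ∈ F, f s ≠ g s) → Disjoint (φ f) (φ g)) :
    Pairwise (Disjoint on restrictHom id φ) := by
  intro i j hij
  refine Set.disjoint_iUnion₂_left.2 fun f hf => Set.disjoint_iUnion₂_right.2 fun g hg => ?_
  exact hφ f g ⟨1, h1F, by simp_all⟩

lemma iUnion_restrictHom_id (hφ : ⋃ f, φ f = Set.univ) :
    ⋃ i, restrictHom id φ i = Set.univ :=
  Set.eq_univ_of_univ_subset <| hφ ▸ Set.iUnion_subset fun f =>
    Set.subset_iUnion_of_subset (f 1) (Set.subset_biUnion_of_mem (u := φ) rfl)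

lemma restrictHom_eq_preimage_comp {c : Fin d → Fin m}
    (hc : restrictHom id φ = fun i => c ⁻¹' {i}) (r : Fin m → Fin n) :
    restrictHom r φ = fun j => (r ∘ c) ⁻¹' {j} := by
  funext j
  ext k
  have hk : ∀ i, (∃ f : G → Fin m, f 1 = i ∧ k ∈ φ f) ↔ c k = i := fun i => by
    simpa [restrictHom] using Set.ext_iff.1 (congrFun hc i) k
  simp only [restrictHom, Set.mem_iUnion, Set.mem_ofPred_eq, exists_prop, Set.mem_preimage,
    Function.comp_apply, Set.mem_singleton_iff]
  exact ⟨fun ⟨f, hfj, hkf⟩ => (hk _).1 ⟨f, rfl, hkf⟩ ▸ hfj,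
    fun h => let ⟨f, hf, hkf⟩ := (hk _).2 rfl; ⟨f, hf ▸ h, hkf⟩⟩

end Restriction

section Cells

variable {G : Type*} [Group G] {X : Type*} [MulAction G X] {m : ℕ} {F : Finset G}
  {A : Fin m → Set X}

lemma disjoint_cellF (hA : Pairwise (Disjoint on A))
    {f g : {s // s ∈ F} → Fin m} (hfg : f ≠ g) : Disjoint (cellF A F f) (cellF A F g) := by
  obtain ⟨s, hs⟩ := Function.ne_iff.1 hfg
  exact (Set.disjoint_smul_set.2 (hA hs)).mono (Set.iInter_subset _ s) (Set.iInter_subset _ s)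

variable [MeasurableSpace X]

lemma measurableSet_cellF (hA : ∀ i, MeasurableSet (A i))
    (hact : ∀ g : G, Measurable fun x : X => g • x) (f : {s // s ∈ F} → Fin m) :
    MeasurableSet (cellF A F f) :=
  MeasurableSet.iInter fun s => by
    rw [← Set.preimage_smul_inv]
    exact hact _ (hA _)

lemma eq_biUnion_cellF [DecidableEq G] (hA : IsFinPartition A) (h1F : (1 : G) ∈ F)
    (i : Fin m) : A i = ⋃ f ∈ ({f | f ⟨1, h1F⟩ = i} : Finset ({s // s ∈ F} → Fin m)),
      cellF A F f := by
  obtain ⟨c, hc⟩ := exists_eq_preimage_singleton hA.2.1 hA.2.2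
  ext x
  simp only [hc, cellF, Set.mem_preimage, Set.mem_singleton_iff, Set.mem_iUnion,
    Finset.mem_filter, Finset.mem_univ, true_and, Set.mem_iInter,
    Set.mem_smul_set_iff_inv_smul_mem, exists_prop]
  refine ⟨fun hx => ⟨fun s => c ((s : G)⁻¹ • x), by simpa using hx, fun s => rfl⟩, ?_⟩
  rintro ⟨f, hfi, hf⟩
  simpa [hfi] using hf ⟨1, h1F⟩

lemma toReal_measure_eq_sum_cellF [DecidableEq G] {μ : Measure X} [IsFiniteMeasure μ]
    (hA : IsFinPartition A) (hact : ∀ g : G, Measurable fun x : X => g • x) (h1F : (1 : G) ∈ F)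
    (i : Fin m) :
    (μ (A i)).toReal = ∑ f : {s // s ∈ F} → Fin m with f ⟨1, h1F⟩ = i,
      (μ (cellF A F f)).toReal := by
  rw [eq_biUnion_cellF hA h1F i, measure_biUnion_finset
    (fun f _ g _ hfg => disjoint_cellF hA.2.1 hfg) fun f _ => measurableSet_cellF hA.1 hact f]
  exact ENNReal.toReal_sum fun f _ => measure_ne_top μ _

end Cells

section CellBlocks

variable {G : Type*} {m d : ℕ} {F : Finset G} {φ : (G → Fin m) → Set (Fin d)}

lemma disjoint_cellBlock
    (hφ : ∀ f g : G → Fin m, (∃ s ∈ F, f s ≠ g s) → Disjoint (φ f) (φ g))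
    {f f' : {s // s ∈ F} → Fin m} (hff' : f ≠ f') :
    Disjoint (cellBlock φ F f) (cellBlock φ F f') := by
  obtain ⟨s, hs⟩ := Function.ne_iff.1 hff'
  refine Set.disjoint_iUnion₂_left.2 fun g hg => Set.disjoint_iUnion₂_right.2 fun g' hg' => ?_
  exact hφ g g' ⟨s, s.2, by rwa [hg s, hg' s]⟩

variable [Group G] [DecidableEq G]

lemma restrictHom_id_eq_biUnion_cellBlock (h1F : (1 : G) ∈ F) (i : Fin m) :
    restrictHom id φ i = ⋃ f ∈ ({f | f ⟨1, h1F⟩ = i} : Finset ({s // s ∈ F} → Fin m)),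
      cellBlock φ F f := by
  ext k
  simp only [restrictHom, cellBlock, Set.mem_iUnion, Set.mem_ofPred_eq, Finset.mem_filter,
    Finset.mem_univ, true_and, id_eq, exists_prop]
  constructor
  · rintro ⟨g, hg, hk⟩
    exact ⟨fun s => g s, hg, g, fun s => rfl, hk⟩
  · rintro ⟨f, hf, g, hg, hk⟩
    exact ⟨g, (hg ⟨1, h1F⟩).trans hf, hk⟩

end CellBlocks

section Hom

variable {G : Type*} [Group G] [DecidableEq G] {X : Type*} [MeasurableSpace X] [MulAction G X]
  {μ : Measure X} {m n d : ℕ} {A : Fin m → Set X} {F : Finset G} {δ : ℝ}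
  {σ : G → Equiv.Perm (Fin d)} {φ : (G → Fin m) → Set (Fin d)}

lemma exists_restrictHom_id_eq_preimage (h1F : (1 : G) ∈ F) (hφ : IsHom μ A F δ σ φ) :
    ∃ c : Fin d → Fin m, restrictHom id φ = fun i => c ⁻¹' {i} :=
  exists_eq_preimage_singleton (pairwise_disjoint_restrictHom_id h1F hφ.2.1)
    (iUnion_restrictHom_id hφ.2.2.1)

lemma unif_restrictHom_id_le [IsFiniteMeasure μ] (hA : IsFinPartition A)
    (hact : ∀ g : G, Measurable fun x : X => g • x) (h1F : (1 : G) ∈ F)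
    (hφ : IsHom μ A F δ σ φ) (i : Fin m) :
    unif (restrictHom id φ i) ≤ (μ (A i)).toReal + δ := by
  rw [restrictHom_id_eq_biUnion_cellBlock h1F,
    unif_biUnion _ fun f _ f' _ hff' => disjoint_cellBlock hφ.2.1 hff',
    toReal_measure_eq_sum_cellF hA hact h1F, ← sub_le_iff_le_add', ← Finset.sum_sub_distrib]
  calc _ ≤ ∑ f : {s // s ∈ F} → Fin m with f ⟨1, h1F⟩ = i,
        |unif (cellBlock φ F f) - (μ (cellF A F f)).toReal| :=
        Finset.sum_le_sum fun f _ => le_abs_self _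
    _ ≤ ∑ f : {s // s ∈ F} → Fin m, |unif (cellBlock φ F f) - (μ (cellF A F f)).toReal| :=
        Finset.sum_le_sum_of_subset_of_nonneg (Finset.filter_subset _ _)
          fun _ _ _ => abs_nonneg _
    _ ≤ δ := hφ.2.2.2.2.le

lemma homCount_id_le [IsFiniteMeasure μ] (hA : IsFinPartition A)
    (hact : ∀ g : G, Measurable fun x : X => g • x) (h1F : (1 : G) ∈ F) (hδ : 0 < δ)
    (σ : G → Equiv.Perm (Fin d)) (r : Fin m → Fin n) :
    (homCount μ A id F δ σ : ℝ)
      ≤ homCount μ A r F δ σ * exp (d * condEnt r fun i => (μ (A i)).toReal + δ) := by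
  set Hom := {φ | IsHom μ A F δ σ φ}
  set fibers : (Fin d → Fin m) → Fin m → Set (Fin d) := fun c i => c ⁻¹' {i}
  set S := fibers ⁻¹' (restrictHom id '' Hom)
  have hid : restrictHom id '' Hom = fibers '' S := by
    refine (Set.image_preimage_eq_of_subset ?_).symm
    rintro _ ⟨φ, hφ, rfl⟩
    obtain ⟨c, hc⟩ := exists_restrictHom_id_eq_preimage h1F hφ
    exact ⟨c, hc.symm⟩
  have hr : restrictHom r '' Hom = (fun c j => c ⁻¹' {j}) '' ((r ∘ ·) '' S) := by
    rw [Set.image_image]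
    ext ψ
    constructor
    · rintro ⟨φ, hφ, rfl⟩
      obtain ⟨c, hc⟩ := exists_restrictHom_id_eq_preimage h1F hφ
      exact ⟨c, ⟨φ, hφ, hc⟩, (restrictHom_eq_preimage_comp hc r).symm⟩
    · rintro ⟨c, ⟨φ, hφ, hc⟩, rfl⟩
      exact ⟨φ, hφ, restrictHom_eq_preimage_comp hc r⟩
  have hS : ∀ c ∈ S, ∀ i,
      (#{k | c k = i} : ℝ) ≤ ((μ (A i)).toReal + δ) * Fintype.card (Fin d) := by
    rintro c ⟨φ, hφ, hc⟩ i
    refine card_fiber_le_of_unif_le ?_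
    simpa [hc, fibers] using unif_restrictHom_id_le hA hact h1F hφ i
  rw [homCount, homCount, hid, hr, Set.ncard_image_of_injective _ injective_preimage_singleton,
    Set.ncard_image_of_injective _ injective_preimage_singleton]
  simpa using ncard_le_ncard_image_comp_mul_exp (fun i => by positivity) r S hS

end Hom

lemma log_natCast_le_log_natCast {p q : ℕ} (h : p ≤ q) : log p ≤ log q := by
  rcases Nat.eq_zero_or_pos p with rfl | hp
  · simpa using log_natCast_nonneg q
  exact log_le_log (by exact_mod_cast hp) (by exact_mod_cast h)

section Rates

variable {G : Type*} [Group G] [DecidableEq G] {X : Type*} [MeasurableSpace X] [MulAction G X]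
  (μ : Measure X) {m n : ℕ} (A : Fin m → Set X) (r : Fin m → Fin n) (F : Finset G)

lemma homCount_le_two_pow (δ : ℝ) {d : ℕ} (σ : G → Equiv.Perm (Fin d)) :
    homCount μ A r F δ σ ≤ 2 ^ (n * d) := by
  calc homCount μ A r F δ σ ≤ Nat.card (Fin n → Set (Fin d)) :=
        Set.ncard_le_card _
    _ = 2 ^ (n * d) := by simp [Nat.card_eq_fintype_card, Fintype.card_set, ← pow_mul, mul_comm]

lemma log_homCount_div_mem_Icc (δ : ℝ) {d : ℕ} (σ : G → Equiv.Perm (Fin d)) :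
    log (homCount μ A r F δ σ) / d ∈ Set.Icc 0 (n * log 2) := by
  refine ⟨div_nonneg (log_natCast_nonneg _) d.cast_nonneg, ?_⟩
  rcases Nat.eq_zero_or_pos d with rfl | hd
  · simp only [Nat.cast_zero, div_zero]
    positivity
  rw [div_le_iff₀ (by exact_mod_cast hd)]
  calc log (homCount μ A r F δ σ) ≤ log (2 ^ (n * d) : ℕ) :=
        log_natCast_le_log_natCast (homCount_le_two_pow μ A r F δ σ)
    _ = n * log 2 * d := by push_cast; rw [log_pow]; push_cast; ring

variable (dseq : ℕ → ℕ) (σ : ∀ i, G → Equiv.Perm (Fin (dseq i)))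

lemma isBoundedUnder_le_log_homCount_div (δ : ℝ) :
    IsBoundedUnder (· ≤ ·) atTop fun i => log (homCount μ A r F δ (σ i)) / dseq i :=
  isBoundedUnder_of ⟨_, fun i => (log_homCount_div_mem_Icc μ A r F δ (σ i)).2⟩

lemma isCoboundedUnder_le_log_homCount_div (δ : ℝ) :
    IsCoboundedUnder (· ≤ ·) atTop fun i => log (homCount μ A r F δ (σ i)) / dseq i :=
  (isBoundedUnder_of ⟨0, fun i =>
    (log_homCount_div_mem_Icc μ A r F δ (σ i)).1⟩).isCoboundedUnder_le

lemma hFδ_nonneg (δ : ℝ) : 0 ≤ hFδ μ A r F δ dseq σ :=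
  le_limsup_of_frequently_le
    (Frequently.of_forall fun i => (log_homCount_div_mem_Icc μ A r F δ (σ i)).1)
    (isBoundedUnder_le_log_homCount_div μ A r F dseq σ δ)

lemma hFδ_mono {δ δ' : ℝ} (h : δ' ≤ δ) : hFδ μ A r F δ' dseq σ ≤ hFδ μ A r F δ dseq σ := by
  refine limsup_le_limsup (Eventually.of_forall fun i => ?_)
    (isCoboundedUnder_le_log_homCount_div μ A r F dseq σ δ')
    (isBoundedUnder_le_log_homCount_div μ A r F dseq σ δ)
  refine div_le_div_of_nonneg_right (log_natCast_le_log_natCast ?_) (Nat.cast_nonneg _)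
  refine Set.ncard_le_ncard (Set.image_mono fun φ ⟨h1, h2, h3, h4, h5⟩ => ?_) (Set.toFinite _)
  exact ⟨h1, h2, h3, fun s hs => (h4 s hs).trans_le h, h5.trans_le h⟩

lemma hPartLoc_le_hFδ {δ : ℝ} (h1F : (1 : G) ∈ F) (hδ : 0 < δ) :
    hPartLoc μ A r dseq σ ≤ hFδ μ A r F δ dseq σ :=
  csInf_le ⟨0, by rintro _ ⟨F', δ', -, -, rfl⟩; exact hFδ_nonneg μ A r F' dseq σ δ'⟩
    ⟨F, δ, h1F, hδ, rfl⟩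

end Rates

lemma log_div_le_log_div_add {p q d : ℕ} {C : ℝ} (hC : 0 ≤ C) (h : (p : ℝ) ≤ q * exp (d * C)) :
    log p / d ≤ log q / d + C := by
  rcases Nat.eq_zero_or_pos d with rfl | hd
  · simpa using hC
  have hd' : (0 : ℝ) < d := by exact_mod_cast hd
  rcases Nat.eq_zero_or_pos p with rfl | hp
  · simp only [Nat.cast_zero, log_zero, zero_div]
    exact add_nonneg (div_nonneg (log_natCast_nonneg q) hd'.le) hC
  have hq : (0 : ℝ) < q := by
    by_contra! hq
    have : (q : ℝ) = 0 := le_antisymm hq q.cast_nonneg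
    simp only [this, zero_mul] at h
    exact absurd h (not_le.2 (by exact_mod_cast hp))
  rw [div_add' _ _ _ hd'.ne', div_le_div_iff_of_pos_right hd']
  calc log p ≤ log (q * exp (d * C)) := log_le_log (by exact_mod_cast hp) h
    _ = log q + C * d := by rw [log_mul hq.ne' (exp_pos _).ne', log_exp, mul_comm]

section Entropy

variable {G : Type*} [Group G] [DecidableEq G] {X : Type*} [MeasurableSpace X] [MulAction G X]
  {μ : Measure X} [IsFiniteMeasure μ] {m n : ℕ} {A : Fin m → Set X} {F : Finset G} {δ : ℝ}

lemma hFδ_id_le_add (hA : IsFinPartition A) (hact : ∀ g : G, Measurable fun x : X => g • x)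
    (h1F : (1 : G) ∈ F) (hδ : 0 < δ) (dseq : ℕ → ℕ)
    (σ : ∀ i, G → Equiv.Perm (Fin (dseq i))) (r : Fin m → Fin n) :
    hFδ μ A id F δ dseq σ
      ≤ hFδ μ A r F δ dseq σ + condEnt r fun i => (μ (A i)).toReal + δ := by
  have hC : 0 ≤ condEnt r fun i => (μ (A i)).toReal + δ :=
    condEnt_nonneg (fun i => by positivity) r
  rw [hFδ, hFδ, ← limsup_add_const _ _ _ (isBoundedUnder_le_log_homCount_div μ A r F dseq σ δ)
    (isCoboundedUnder_le_log_homCount_div μ A r F dseq σ δ)]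
  refine limsup_le_limsup (Eventually.of_forall fun i =>
      log_div_le_log_div_add hC (homCount_id_le hA hact h1F hδ (σ i) r))
    (isCoboundedUnder_le_log_homCount_div μ A id F dseq σ δ)
    (isBoundedUnder_of ⟨_, fun i =>
      add_le_add_left (log_homCount_div_mem_Icc μ A r F δ (σ i)).2 _⟩)

lemma fiberWeight_toReal_measure {P : Fin n → Set X} {r : Fin m → Fin n}
    (hP : IsFinPartition P) (hA : IsFinPartition A) (hr : PartRefines A P r) (j : Fin n) :
    fiberWeight r (fun i => (μ (A i)).toReal) j = (μ (P j)).toReal := by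
  obtain ⟨cA, hcA⟩ := exists_eq_preimage_singleton hA.2.1 hA.2.2
  obtain ⟨cP, hcP⟩ := exists_eq_preimage_singleton hP.2.1 hP.2.2
  have hc : ∀ x, cP x = r (cA x) := fun x => by
    simpa [hcA, hcP] using hr (cA x) (show x ∈ A (cA x) by rw [hcA]; rfl)
  have hPj : P j = ⋃ i ∈ ({i | r i = j} : Finset (Fin m)), A i := by
    ext x
    simp [hcA, hcP, hc]
  rw [hPj, measure_biUnion_finset (fun i _ i' _ h => hA.2.1 h) fun i _ => hA.1 i,
    ENNReal.toReal_sum fun i _ => measure_ne_top μ _]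
  rfl

lemma condEnt_toReal_measure {P : Fin n → Set X} {r : Fin m → Fin n}
    (hP : IsFinPartition P) (hA : IsFinPartition A) (hr : PartRefines A P r) :
    condEnt r (fun i => (μ (A i)).toReal) = shannonEnt μ A - shannonEnt μ P := by
  simp only [condEnt_eq_sub, fiberWeight_toReal_measure hP hA hr, shannonEnt, negMulLog,
    neg_mul, Finset.sum_neg_distrib]

end Entropy

end Sofic

open Sofic Topology

theorem stmt12_general {G : Type*} [Group G] [DecidableEq G]
    {X : Type*} [MeasurableSpace X] [MulAction G X]
    (μ : Measure X) [IsProbabilityMeasure μ]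
    (hact : ∀ g : G, MeasurePreserving (fun x : X => g • x) μ μ)
    (dseq : ℕ → ℕ) (σ : ∀ i, G → Equiv.Perm (Fin (dseq i)))
    {n m : ℕ} (P : Fin n → Set X) (A : Fin m → Set X) (r : Fin m → Fin n)
    (hP : IsFinPartition P) (hA : IsFinPartition A) (hr : PartRefines A P r) :
    hPartLoc μ A (id : Fin m → Fin m) dseq σ - (shannonEnt μ A - shannonEnt μ P)
      ≤ hPartLoc μ A r dseq σ := by
  refine le_csInf ⟨_, {1}, 1, Finset.mem_singleton_self 1, one_pos, rfl⟩ ?_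
  rintro _ ⟨F, δ, h1F, hδ, rfl⟩
  set a : Fin m → ℝ := fun i => (μ (A i)).toReal
  rw [← condEnt_toReal_measure hP hA hr, sub_le_iff_le_add]
  have hlim : Tendsto (fun t => hFδ μ A r F δ dseq σ + condEnt r fun i => a i + t)
      (𝓝[>] 0) (𝓝 (hFδ μ A r F δ dseq σ + condEnt r a)) := by
    simpa using (tendsto_const_nhds.add ((continuous_condEnt_add r a).tendsto 0)).mono_left
      nhdsWithin_le_nhds
  refine ge_of_tendsto hlim ?_
  filter_upwards [Ioc_mem_nhdsGT hδ] with t ⟨ht, htδ⟩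
  calc hPartLoc μ A id dseq σ ≤ hFδ μ A id F t dseq σ := hPartLoc_le_hFδ μ A id F dseq σ h1F ht
    _ ≤ hFδ μ A r F t dseq σ + condEnt r (fun i => a i + t) :=
      hFδ_id_le_add hA (fun g => (hact g).measurable) h1F ht dseq σ r
    _ ≤ hFδ μ A r F δ dseq σ + condEnt r (fun i => a i + t) :=
      add_le_add (hFδ_mono μ A r F dseq σ htδ) le_rfl

/-- Lemma 4.1(ii).  Let `(X,B,μ)` be a probability space with a
measure-preserving action of a countable sofic group `G`, and `Σ` a sofic approximation
sequence.  For finite measurable partitions `α ≥ ξ` (refinement witnessed by `r`), one has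
`h_{Σ,μ}^ξ(α) ≥ h_{Σ,μ}^α(α) - H_μ(α|ξ)`; since `α` refines `ξ`, the conditional
Shannon entropy is `H_μ(α|ξ) = H_μ(α) - H_μ(ξ)`.  Here `h_{Σ,μ}^α(α)` is obtained by
taking the identity refinement map. -/
theorem stmt12 {G : Type*} [Group G] [Countable G] [DecidableEq G]
    {X : Type*} [MeasurableSpace X] [MulAction G X]
    (μ : Measure X) [IsProbabilityMeasure μ]
    (hact : ∀ g : G, MeasurePreserving (fun x : X => g • x) μ μ)
    (dseq : ℕ → ℕ) (σ : ∀ i, G → Equiv.Perm (Fin (dseq i)))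
    (hσ : IsSoficApprox dseq σ)
    {n m : ℕ} (P : Fin n → Set X) (A : Fin m → Set X) (r : Fin m → Fin n)
    (hP : IsFinPartition P) (hA : IsFinPartition A) (hr : PartRefines A P r) :
    hPartLoc μ A (id : Fin m → Fin m) dseq σ - (shannonEnt μ A - shannonEnt μ P)
      ≤ hPartLoc μ A r dseq σ :=
  stmt12_general μ hact dseq σ P A r hP hA hr
end

section
/- Let κ be a probability measure on {1,…,n}, F a finite set with e ∈ F, d ∈ ℕ, and σ : F → Sym({1,…,d}). Let V be the set of v ∈ {1,…,d} such that the points σ(s)^{-1}(v), s ∈ F, are pairwise distinct, and suppose |V|/d ≥ 1 − η. Fix f ∈ {1,…,n}^F and for γ ∈ {1,…,n}^d set Q_{γ,f} = ⋂_{s∈F} σ(s)(γ^{-1}(f(s))). Then for every t > 2η, the κ^d-probability that |ζ(Q_{γ,f}) − Π_{s∈F} κ({f(s)})| > t is at most |F|²/(d(t−2η)²). -/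
/-!
Let `Z_v(γ)` be the indicator of `v ∈ Q_{γ,f}`, i.e. that `γ` reads `f` at the coordinates
`σ(s)⁻¹ v`, `s ∈ F`. For `v ∈ V` these coordinates are distinct, so `Z_v` has mean
`∏ s, p (f s)`, and two points with disjoint coordinate sets give independent indicators. A point
`v` shares a coordinate only with the `|F|²` points `σ(t)(σ(s)⁻¹ v)`, so `S = ∑_{v ∈ V} Z_v` has
variance at most `d |F|²`. Since `|Q_{γ,f}|` differs from `S`, and `d ∏ s, p (f s)` from the mean
of `S`, by at most `d - |V| ≤ η d` each, Chebyshev's inequality for `S` at distance `d (t - 2η)`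
gives the bound.
-/

open Finset

section ProductWeight

variable {ι α : Type*} [Fintype ι] [DecidableEq ι] [Fintype α]

theorem sum_prod_eq_one (p : α → ℝ) (hsum : ∑ i, p i = 1) :
    ∑ γ : ι → α, ∏ k, p (γ k) = 1 := by
  rw [← Fintype.prod_sum, hsum, prod_const_one]

theorem sum_filter_prod_le_one (p : α → ℝ) (hp : ∀ i, 0 ≤ p i) (hsum : ∑ i, p i = 1)
    (P : (ι → α) → Prop) [DecidablePred P] :
    ∑ γ with P γ, ∏ k, p (γ k) ≤ 1 :=
  (sum_le_sum_of_subset_of_nonneg (filter_subset _ _) fun γ _ _ =>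
    prod_nonneg fun k _ => hp (γ k)).trans_eq (sum_prod_eq_one p hsum)

theorem sum_filter_forall_apply_eq_prod [DecidableEq α] (p : α → ℝ) (hsum : ∑ i, p i = 1)
    {A : Type*} [Fintype A] {c : A → ι} (hc : Function.Injective c) (g : A → α) :
    ∑ γ : ι → α with ∀ a, γ (c a) = g a, ∏ k, p (γ k) = ∏ a, p (g a) := by
  -- the event is the box `∏ k, t k`, with `t (c a) = {g a}` and `t k = univ` off the range of `c`
  set t : ι → Finset α := fun k => {i | ∀ a, c a = k → i = g a}
  have hfilter : ({γ : ι → α | ∀ a, γ (c a) = g a} : Finset _) = Fintype.piFinset t := by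
    ext γ
    simp only [mem_filter, mem_univ, true_and, Fintype.mem_piFinset, t]
    exact ⟨fun h k a hk => hk ▸ h a, fun h a => h _ a rfl⟩
  have ht_off : ∀ k ∉ Set.range c, t k = univ := by
    intro k hk
    ext i
    simp_all [t]
  have ht_on : ∀ a, t (c a) = {g a} := by
    intro a
    ext i
    simp [t, hc.eq_iff]
  rw [hfilter, ← prod_univ_sum]
  refine (Fintype.prod_of_injective c hc _ _ (fun k hk => ?_) (fun a => ?_)).symm
  · rw [ht_off k hk, hsum]
  · rw [ht_on, sum_singleton]

end ProductWeight

section FiniteProbability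

variable {Ω : Type*} [Fintype Ω]

theorem sum_filter_le_sum_mul_sq_div {w X : Ω → ℝ} (hw : ∀ ω, 0 ≤ w ω) {a : ℝ} (ha : 0 < a)
    (P : Ω → Prop) [DecidablePred P] (hP : ∀ ω, P ω → a ≤ |X ω|) :
    ∑ ω with P ω, w ω ≤ (∑ ω, w ω * X ω ^ 2) / a ^ 2 := by
  rw [sum_div]
  calc ∑ ω with P ω, w ω ≤ ∑ ω with P ω, w ω * (X ω ^ 2 / a ^ 2) := by
        refine sum_le_sum fun ω hω => le_mul_of_one_le_right (hw ω) ?_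
        rw [one_le_div (by positivity), ← sq_abs (X ω)]
        exact pow_le_pow_left₀ ha.le (hP ω (mem_filter.1 hω).2) 2
    _ ≤ ∑ ω, w ω * X ω ^ 2 / a ^ 2 := by
        simp only [mul_div_assoc]
        exact sum_le_sum_of_subset_of_nonneg (subset_univ _) fun ω _ _ =>
          mul_nonneg (hw ω) (by positivity)

theorem sum_mul_sq_sum_sub_eq_sum_covariance {w : Ω → ℝ} (hw : ∑ ω, w ω = 1)
    {κ : Type*} (V : Finset κ) (Z : κ → Ω → ℝ) :
    ∑ ω, w ω * (∑ v ∈ V, Z v ω - ∑ v ∈ V, ∑ ω', w ω' * Z v ω') ^ 2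
      = ∑ v ∈ V, ∑ u ∈ V, (∑ ω, w ω * (Z v ω * Z u ω)
          - (∑ ω, w ω * Z v ω) * ∑ ω, w ω * Z u ω) := by
  set m : κ → ℝ := fun v => ∑ ω, w ω * Z v ω
  have hcov : ∀ v u, ∑ ω, w ω * ((Z v ω - m v) * (Z u ω - m u))
      = ∑ ω, w ω * (Z v ω * Z u ω) - m v * m u := by
    intro v u
    have : ∀ ω, w ω * ((Z v ω - m v) * (Z u ω - m u)) = w ω * (Z v ω * Z u ω)
        - m u * (w ω * Z v ω) - m v * (w ω * Z u ω) + m v * m u * w ω := fun ω => by ring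
    simp only [this, sum_add_distrib, sum_sub_distrib, ← mul_sum, hw, m]
    ring
  calc ∑ ω, w ω * (∑ v ∈ V, Z v ω - ∑ v ∈ V, m v) ^ 2
      = ∑ ω, ∑ v ∈ V, ∑ u ∈ V, w ω * ((Z v ω - m v) * (Z u ω - m u)) := by
        refine sum_congr rfl fun ω _ => ?_
        rw [← sum_sub_distrib, sq, sum_mul_sum]
        simp only [mul_sum]
    _ = ∑ v ∈ V, ∑ u ∈ V, ∑ ω, w ω * ((Z v ω - m v) * (Z u ω - m u)) := by
        rw [sum_comm]
        exact sum_congr rfl fun v _ => sum_comm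
    _ = _ := by simp only [hcov, m]

end FiniteProbability

theorem abs_sub_sub_le_abs_sub_mul {x N m D q : ℝ} (hxN : x ≤ N) (hN : N + m ≤ x + D)
    (hq₀ : 0 ≤ q) (hq₁ : q ≤ 1) :
    |N - D * q| - (D - m) ≤ |x - m * q| := by
  have hcorr : |(N - x) - (D - m) * q| ≤ D - m := by
    have : (D - m) * q ≤ D - m := mul_le_of_le_one_right (by linarith) hq₁
    have : 0 ≤ (D - m) * q := mul_nonneg (by linarith) hq₀
    exact abs_le.2 ⟨by linarith, by linarith⟩
  calc |N - D * q| - (D - m) ≤ |N - D * q| - |(N - x) - (D - m) * q| := by gcongr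
    _ ≤ |(N - D * q) - ((N - x) - (D - m) * q)| := abs_sub_abs_le_abs_sub _ _
    _ = |x - m * q| := by ring_nf

section Translates

variable {ι α F : Type*} [Fintype ι] [DecidableEq ι] [Fintype α] [DecidableEq α] [Fintype F]

theorem card_filter_exists_inv_apply_eq_le (σ : F → Equiv.Perm ι) (v : ι) :
    #{u | ∃ s t, (σ s)⁻¹ v = (σ t)⁻¹ u} ≤ Fintype.card F ^ 2 := by
  calc #{u | ∃ s t, (σ s)⁻¹ v = (σ t)⁻¹ u}
      ≤ #((univ : Finset (F × F)).image fun st => σ st.2 ((σ st.1)⁻¹ v)) := by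
        refine card_le_card fun u hu => ?_
        obtain ⟨s, t, hst⟩ := (mem_filter.1 hu).2
        exact mem_image.2 ⟨(s, t), mem_univ _, by simp [hst]⟩
    _ ≤ Fintype.card F ^ 2 := by
        refine card_image_le.trans ?_
        simp [sq]

def separatedPoints (σ : F → Equiv.Perm ι) : Finset ι :=
  {v | Function.Injective fun s => (σ s)⁻¹ v}

/-- The set `Q_{γ,f} = ⋂_{s ∈ F} σ(s)(γ⁻¹(f s))` of the paper. -/
def patternSet (σ : F → Equiv.Perm ι) (f : F → α) (γ : ι → α) : Finset ι :=
  {v | ∀ s, γ ((σ s)⁻¹ v) = f s}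

variable (p : α → ℝ) (σ : F → Equiv.Perm ι) (f : F → α)

theorem sum_filter_mem_patternSet_eq_prod (hsum : ∑ i, p i = 1) {v : ι}
    (hv : v ∈ separatedPoints σ) :
    ∑ γ : ι → α with v ∈ patternSet σ f γ, ∏ k, p (γ k) = ∏ s, p (f s) := by
  simpa [patternSet] using sum_filter_forall_apply_eq_prod p hsum (mem_filter.1 hv).2 f

theorem sum_filter_mem_patternSet_and_mem_eq_prod_sq (hsum : ∑ i, p i = 1) {v u : ι}
    (hv : v ∈ separatedPoints σ) (hu : u ∈ separatedPoints σ)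
    (hvu : ∀ s t, (σ s)⁻¹ v ≠ (σ t)⁻¹ u) :
    ∑ γ : ι → α with v ∈ patternSet σ f γ ∧ u ∈ patternSet σ f γ, ∏ k, p (γ k)
      = (∏ s, p (f s)) ^ 2 := by
  have hinj : Function.Injective (Sum.elim (fun s => (σ s)⁻¹ v) fun s => (σ s)⁻¹ u) := by
    rintro (s | s) (t | t) hst
    · exact congrArg Sum.inl ((mem_filter.1 hv).2 hst)
    · exact absurd hst (hvu s t)
    · exact absurd hst.symm (hvu t s)
    · exact congrArg Sum.inr ((mem_filter.1 hu).2 hst)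
  have := sum_filter_forall_apply_eq_prod p hsum hinj (Sum.elim f f)
  simp only [Sum.forall, Sum.elim_inl, Sum.elim_inr, Fintype.prod_sum_type] at this
  simpa [patternSet, sq] using this

theorem sum_filter_mem_patternSet_and_mem_sub_mul_le (hp : ∀ i, 0 ≤ p i)
    (hsum : ∑ i, p i = 1) {v u : ι} (hv : v ∈ separatedPoints σ) (hu : u ∈ separatedPoints σ) :
    ∑ γ : ι → α with v ∈ patternSet σ f γ ∧ u ∈ patternSet σ f γ, ∏ k, p (γ k)
        - (∑ γ : ι → α with v ∈ patternSet σ f γ, ∏ k, p (γ k))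
          * ∑ γ : ι → α with u ∈ patternSet σ f γ, ∏ k, p (γ k)
      ≤ if ∃ s t, (σ s)⁻¹ v = (σ t)⁻¹ u then 1 else 0 := by
  rw [sum_filter_mem_patternSet_eq_prod p σ f hsum hv,
    sum_filter_mem_patternSet_eq_prod p σ f hsum hu]
  split_ifs with hvu
  · have hq : 0 ≤ ∏ s, p (f s) := prod_nonneg fun s _ => hp (f s)
    nlinarith [sum_filter_prod_le_one p hp hsum
      fun γ : ι → α => v ∈ patternSet σ f γ ∧ u ∈ patternSet σ f γ]
  · push Not at hvu
    rw [sum_filter_mem_patternSet_and_mem_eq_prod_sq p σ f hsum hv hu hvu, sq, sub_self]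

theorem sum_mul_sq_card_inter_patternSet_sub_le (hp : ∀ i, 0 ≤ p i) (hsum : ∑ i, p i = 1) :
    ∑ γ : ι → α, (∏ k, p (γ k)) *
        ((#(separatedPoints σ ∩ patternSet σ f γ) : ℝ) - #(separatedPoints σ) * ∏ s, p (f s)) ^ 2
      ≤ Fintype.card ι * Fintype.card F ^ 2 := by
  set V := separatedPoints σ
  set Z : ι → (ι → α) → ℝ := fun v γ => if v ∈ patternSet σ f γ then 1 else 0
  have hexpect : ∀ (P : (ι → α) → Prop) [DecidablePred P],
      ∑ γ, (∏ k, p (γ k)) * (if P γ then 1 else 0) = ∑ γ with P γ, ∏ k, p (γ k) := by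
    intro P _
    simp only [mul_boole, sum_filter]
  have hmean : ∀ v ∈ V, ∑ γ, (∏ k, p (γ k)) * Z v γ = ∏ s, p (f s) := fun v hv => by
    rw [hexpect]; exact sum_filter_mem_patternSet_eq_prod p σ f hsum hv
  calc _ = ∑ γ, (∏ k, p (γ k)) *
          (∑ v ∈ V, Z v γ - ∑ v ∈ V, ∑ γ', (∏ k, p (γ' k)) * Z v γ') ^ 2 := by
        simp only [Z, sum_boole, filter_mem_eq_inter, sum_congr rfl hmean, sum_const,
          nsmul_eq_mul]
    _ = _ := sum_mul_sq_sum_sub_eq_sum_covariance (sum_prod_eq_one p hsum) V Z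
    _ ≤ ∑ v ∈ V, ∑ u, if ∃ s t, (σ s)⁻¹ v = (σ t)⁻¹ u then (1 : ℝ) else 0 := by
        refine sum_le_sum fun v hv => (sum_le_sum fun u hu => ?_).trans
          (sum_le_sum_of_subset_of_nonneg (subset_univ V) fun _ _ _ => by positivity)
        simpa only [Z, ite_zero_mul_ite_zero, one_mul, hexpect]
          using sum_filter_mem_patternSet_and_mem_sub_mul_le p σ f hp hsum hv hu
    _ ≤ ∑ v ∈ V, (Fintype.card F ^ 2 : ℝ) := by
        refine sum_le_sum fun v _ => ?_
        rw [sum_boole]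
        exact_mod_cast card_filter_exists_inv_apply_eq_le σ v
    _ ≤ Fintype.card ι * Fintype.card F ^ 2 := by
        rw [sum_const, nsmul_eq_mul]
        gcongr
        exact_mod_cast card_le_univ V

theorem mul_sub_two_mul_le_abs_card_inter_patternSet_sub (hp : ∀ i, 0 ≤ p i)
    (hsum : ∑ i, p i = 1) {η t : ℝ}
    (hV : Fintype.card ι - #(separatedPoints σ) ≤ η * Fintype.card ι) (γ : ι → α)
    (hγ : t * Fintype.card ι < |(#(patternSet σ f γ) : ℝ) - Fintype.card ι * ∏ s, p (f s)|) :
    Fintype.card ι * (t - 2 * η)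
      ≤ |(#(separatedPoints σ ∩ patternSet σ f γ) : ℝ) - #(separatedPoints σ) * ∏ s, p (f s)| := by
  set V := separatedPoints σ
  set Q := patternSet σ f γ
  have hq₀ : 0 ≤ ∏ s, p (f s) := prod_nonneg fun s _ => hp (f s)
  have hq₁ : ∏ s, p (f s) ≤ 1 := prod_le_one (fun s _ => hp (f s)) fun s _ =>
    hsum ▸ single_le_sum (fun i _ => hp i) (mem_univ (f s))
  have hVcard : (#V : ℝ) ≤ Fintype.card ι := by exact_mod_cast card_le_univ V
  have hcount : (#Q : ℝ) + #V ≤ #(V ∩ Q) + Fintype.card ι := by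
    rw [add_comm (#Q : ℝ), add_comm _ (Fintype.card ι : ℝ)]
    exact_mod_cast (card_union_add_card_inter V Q).symm.trans_le
      (Nat.add_le_add_right (card_le_univ _) _)
  have hsplit := abs_sub_sub_le_abs_sub_mul
    (Nat.cast_le.2 (card_le_card inter_subset_right)) hcount hq₀ hq₁
  linarith

end Translates

theorem stmt17_general {n d : ℕ} (hd : 0 < d) (p : Fin n → ℝ) (hp : ∀ i, 0 ≤ p i)
    (hsum : ∑ i, p i = 1)
    {F : Type*} [Fintype F] (σ : F → Equiv.Perm (Fin d))
    (η : ℝ)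
    (hV : 1 - η ≤ ({v : Fin d | Function.Injective fun s : F => (σ s)⁻¹ v}.ncard : ℝ) / d)
    (f : F → Fin n) (t : ℝ) (ht : 2 * η < t) :
    ∑ γ ∈ Finset.univ.filter (fun γ : Fin d → Fin n =>
        |({k : Fin d | ∀ s : F, γ ((σ s)⁻¹ k) = f s}.ncard : ℝ) / d - ∏ s, p (f s)| > t),
      ∏ k, p (γ k)
    ≤ (Fintype.card F : ℝ) ^ 2 / (d * (t - 2 * η) ^ 2) := by
  have hd' : (0 : ℝ) < d := Nat.cast_pos.2 hd
  have hVη : (d : ℝ) - #(separatedPoints σ) ≤ η * d := by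
    have hncard : ({v : Fin d | Function.Injective fun s : F => (σ s)⁻¹ v}.ncard : ℝ)
        = #(separatedPoints σ) := by
      simp [Set.ncard_eq_toFinset_card', separatedPoints]
    rw [hncard, le_div_iff₀ hd'] at hV
    linarith
  calc _ ≤ (∑ γ : Fin d → Fin n, (∏ k, p (γ k)) * ((#(separatedPoints σ ∩ patternSet σ f γ) : ℝ)
            - #(separatedPoints σ) * ∏ s, p (f s)) ^ 2) / (d * (t - 2 * η)) ^ 2 := by
        refine sum_filter_le_sum_mul_sq_div (fun γ => prod_nonneg fun k _ => hp (γ k))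
          (mul_pos hd' (by linarith)) _ fun γ hγ => ?_
        have hncard : ({k | ∀ s, γ ((σ s)⁻¹ k) = f s}.ncard : ℝ) = #(patternSet σ f γ) := by
          simp [Set.ncard_eq_toFinset_card', patternSet]
        rw [gt_iff_lt, hncard, div_sub' hd'.ne', abs_div, abs_of_pos hd', lt_div_iff₀ hd'] at hγ
        simpa using mul_sub_two_mul_le_abs_card_inter_patternSet_sub p σ f hp hsum
          (by simpa using hVη) γ (by simpa [mul_comm] using hγ)
    _ ≤ (d * Fintype.card F ^ 2) / (d * (t - 2 * η)) ^ 2 := by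
        gcongr
        simpa using sum_mul_sq_card_inter_patternSet_sub_le p σ f hp hsum
    _ = (Fintype.card F : ℝ) ^ 2 / (d * (t - 2 * η) ^ 2) := by
        field_simp

/-- Let `p` be a probability measure on `{1,…,n}`, `F` a (nonempty) finite
set, `d > 0`, `σ : F → Sym({1,…,d})`.  Let `V` be the set of `v` such that the points
`σ(s)⁻¹(v)`, `s ∈ F`, are pairwise distinct, and suppose `|V|/d ≥ 1 - η`.  Fix
`f ∈ {1,…,n}^F` and for `γ ∈ {1,…,n}^d` let
`Q_{γ,f} = ⋂_{s∈F} σ(s)(γ⁻¹(f s)) = {k : ∀ s, γ(σ(s)⁻¹ k) = f s}`.  Then for every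
`t > 2η` the `p^d`-probability that `|ζ(Q_{γ,f}) - ∏ s, p (f s)| > t` is at most
`|F|²/(d (t-2η)²)`. -/
theorem stmt17 {n d : ℕ} (hd : 0 < d) (p : Fin n → ℝ) (hp : ∀ i, 0 ≤ p i)
    (hsum : ∑ i, p i = 1)
    {F : Type*} [Fintype F] [Nonempty F] (σ : F → Equiv.Perm (Fin d))
    (η : ℝ)
    (hV : 1 - η ≤ ({v : Fin d | Function.Injective fun s : F => (σ s)⁻¹ v}.ncard : ℝ) / d)
    (f : F → Fin n) (t : ℝ) (ht : 2 * η < t) :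
    ∑ γ ∈ Finset.univ.filter (fun γ : Fin d → Fin n =>
        |({k : Fin d | ∀ s : F, γ ((σ s)⁻¹ k) = f s}.ncard : ℝ) / d - ∏ s, p (f s)| > t),
      ∏ k, p (γ k)
    ≤ (Fintype.card F : ℝ) ^ 2 / (d * (t - 2 * η) ^ 2) :=
  stmt17_general hd p hp hsum σ η hV f t ht
end
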